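/- arXiv:math/0211288 — 7 statements merged into one kernel-verified Lean document; each statement's English description precedes it below -/
import Mathlib

section
/- In the universal enveloping algebra U(gl_n), for all r, s ≥ 0 and all indices 1 ≤ i,j,k,l ≤ n one has [(E^{r+1})_ij, (E^s)_kl] − [(E^r)_ij, (E^{s+1})_kl] = (E^r)_kj (E^s)_il − (E^s)_kj (E^r)_il. (This identity shows that the assignment t^{(r)}_{ij} ↦ (E^r)_{ij} satisfies the defining relations of the Yangian.) -/
/-!
Only the commutation relations `[E_ij, E_kl] = δ_kj E_il - δ_il E_kj` matter, so `E` may be any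
matrix `X` over a ring satisfying them. They propagate to
`[X_ij, (X^s)_kl] = δ_kj (X^s)_il - δ_il (X^s)_kj`, and an induction on `s`, closed by a
telescoping sum, gives the closed form
`[(X^r)_ij, (X^s)_kl] = ∑_{t<r} ((X^t)_kj (X^(r+s-1-t))_il - (X^(r+s-1-t))_kj (X^t)_il)`.
In both commutators of the Yangian relation the exponents add up to `r + s + 1`, so the two closed
forms have the same summands and differ only by the summand `t = r`.
-/
noncomputable section

attribute [local instance 100] LieRing.ofAssociativeRing

abbrev glUEA (n : ℕ) : Type :=
  UniversalEnvelopingAlgebra ℂ (Matrix (Fin n) (Fin n) ℂ)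

noncomputable def Egen (n : ℕ) (i j : Fin n) : glUEA n :=
  UniversalEnvelopingAlgebra.ι ℂ (Matrix.single i j 1)

noncomputable def Emat (n : ℕ) : Matrix (Fin n) (Fin n) (glUEA n) :=
  Matrix.of fun i j => Egen n i j

open Finset

theorem Ring.lie_mul {A : Type*} [Ring A] (a b c : A) : ⁅a, b * c⁆ = ⁅a, b⁆ * c + b * ⁅a, c⁆ := by
  simp only [Ring.lie_def]
  noncomm_ring

theorem Finset.sum_range_sub_swap_eq_zero {M : Type*} [AddCommGroup M] (f : ℕ → ℕ → M) (n : ℕ) :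
    ∑ t ∈ range n, (f t (n - 1 - t) - f (n - 1 - t) t) = 0 := by
  rw [sum_sub_distrib, sub_eq_zero, ← sum_range_reflect]
  refine sum_congr rfl fun t ht => ?_
  rw [Nat.sub_sub_self (by simp at ht; omega)]

namespace Matrix

variable {ι A : Type*} [Fintype ι] [DecidableEq ι]

theorem single_one_mul_single_one [Semiring A] (i j k l : ι) :
    single i j (1 : A) * single k l 1 = if k = j then single i l 1 else 0 := by
  split_ifs with h
  · subst h
    simp
  · exact single_mul_single_of_ne (h := Ne.symm h) ..

theorem lie_single_one_single_one [Ring A] (i j k l : ι) :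
    ⁅(single i j 1 : Matrix ι ι A), (single k l 1 : Matrix ι ι A)⁆
      = (if k = j then single i l 1 else 0) - (if i = l then single k j 1 else 0) := by
  rw [Ring.lie_def, single_one_mul_single_one, single_one_mul_single_one]

theorem pow_succ_apply [Semiring A] (X : Matrix ι ι A) (s : ℕ) (i j : ι) :
    (X ^ (s + 1)) i j = ∑ a, (X ^ s) i a * X a j := by
  rw [pow_succ, mul_apply]

/-- The commutation relations of the matrix units of `gl_n`. -/
def GLRelations [Ring A] (X : Matrix ι ι A) : Prop :=
  ∀ i j k l, ⁅X i j, X k l⁆ = (if k = j then X i l else 0) - (if i = l then X k j else 0)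

namespace GLRelations

variable [Ring A] {X : Matrix ι ι A}

theorem lie_pow_apply (hX : X.GLRelations) (s : ℕ) (i j k l : ι) :
    ⁅X i j, (X ^ s) k l⁆
      = (if k = j then (X ^ s) i l else 0) - (if i = l then (X ^ s) k j else 0) := by
  induction s generalizing l with
  | zero =>
    simp only [pow_zero, one_apply]
    split_ifs <;> simp_all [Ring.lie_def]
  | succ s ih =>
    simp only [pow_succ_apply, lie_sum, Ring.lie_mul, ih, hX i j, sum_add_distrib, sub_mul, mul_sub,
      ite_mul, mul_ite, zero_mul, mul_zero, sum_sub_distrib, sum_ite_eq, sum_ite_eq', mem_univ,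
      if_true, sum_ite_irrel, sum_const_zero]
    split_ifs <;> abel_nf

theorem lie_pow_apply_apply (hX : X.GLRelations) (r : ℕ) (i j k l : ι) :
    ⁅(X ^ r) i j, X k l⁆
      = (if k = j then (X ^ r) i l else 0) - (if i = l then (X ^ r) k j else 0) := by
  rw [← lie_skew, hX.lie_pow_apply, neg_sub]

theorem lie_pow_apply_pow_apply (hX : X.GLRelations) (r s : ℕ) (i j k l : ι) :
    ⁅(X ^ r) i j, (X ^ s) k l⁆
      = ∑ t ∈ range r,
          ((X ^ t) k j * (X ^ (r + s - 1 - t)) i l - (X ^ (r + s - 1 - t)) k j * (X ^ t) i l) := by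
  induction s generalizing l with
  | zero =>
    rw [add_zero, sum_range_sub_swap_eq_zero (fun t u => (X ^ t) k j * (X ^ u) i l), pow_zero,
      one_apply]
    split_ifs <;> simp [Ring.lie_def]
  | succ s ih =>
    have first : ∑ a, ⁅(X ^ r) i j, (X ^ s) k a⁆ * X a l
        = ∑ t ∈ range r,
            ((X ^ t) k j * (X ^ (r + s - t)) i l - (X ^ (r + s - 1 - t)) k j * (X ^ (t + 1)) i l) := by
      simp only [ih, sum_mul, sub_mul, mul_assoc, sum_sub_distrib]
      rw [sum_comm, sum_comm (s := univ)]
      simp only [← mul_sum, ← pow_succ_apply]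
      congr 1
      refine sum_congr rfl fun t ht => ?_
      rw [show r + s - 1 - t + 1 = r + s - t by simp at ht; omega]
    have second : ∑ a, (X ^ s) k a * ⁅(X ^ r) i j, X a l⁆
        = (X ^ s) k j * (X ^ r) i l - if i = l then (X ^ (r + s)) k j else 0 := by
      simp only [hX.lie_pow_apply_apply, mul_sub, mul_ite, mul_zero, sum_sub_distrib, sum_ite_eq',
        mem_univ, if_true, sum_ite_irrel, sum_const_zero]
      rw [add_comm r s, pow_add, mul_apply]
    have telescope : ∑ t ∈ range r,
        ((X ^ (r + s - 1 - t)) k j * (X ^ (t + 1)) i l - (X ^ (r + s - t)) k j * (X ^ t) i l)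
        = (X ^ s) k j * (X ^ r) i l - if i = l then (X ^ (r + s)) k j else 0 := by
      have h := sum_range_sub (fun t => (X ^ (r + s - t)) k j * (X ^ t) i l) r
      simp only [Nat.add_sub_cancel_left, Nat.sub_zero, pow_zero, one_apply, mul_ite, mul_one,
        mul_zero] at h
      rw [← h]
      refine sum_congr rfl fun t _ => ?_
      rw [Nat.sub_sub, add_comm 1 t]
    rw [pow_succ_apply, lie_sum]
    simp only [Ring.lie_mul]
    rw [sum_add_distrib, first, second, ← telescope, ← sum_add_distrib,
      show r + (s + 1) - 1 = r + s by omega]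
    refine sum_congr rfl fun t _ => ?_
    abel

theorem yangian_relation (hX : X.GLRelations) (r s : ℕ) (i j k l : ι) :
    ⁅(X ^ (r + 1)) i j, (X ^ s) k l⁆ - ⁅(X ^ r) i j, (X ^ (s + 1)) k l⁆
      = (X ^ r) k j * (X ^ s) i l - (X ^ s) k j * (X ^ r) i l := by
  rw [hX.lie_pow_apply_pow_apply, hX.lie_pow_apply_pow_apply, show r + 1 + s - 1 = r + s by omega,
    show r + (s + 1) - 1 = r + s by omega, sum_range_succ, add_sub_cancel_left,
    Nat.add_sub_cancel_left]

end GLRelations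

end Matrix

theorem Emat_glRelations (n : ℕ) : (Emat n).GLRelations := by
  intro i j k l
  simp only [Emat, Matrix.of_apply, Egen]
  rw [← LieHom.map_lie, Matrix.lie_single_one_single_one]
  split_ifs <;> simp

theorem stmt1 (n r s : ℕ) (i j k l : Fin n) :
    ((Emat n ^ (r + 1)) i j * (Emat n ^ s) k l - (Emat n ^ s) k l * (Emat n ^ (r + 1)) i j)
      - ((Emat n ^ r) i j * (Emat n ^ (s + 1)) k l - (Emat n ^ (s + 1)) k l * (Emat n ^ r) i j)
      = (Emat n ^ r) k j * (Emat n ^ s) i l - (Emat n ^ s) k j * (Emat n ^ r) i l :=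
  (Emat_glRelations n).yangian_relation r s i j k l
end
end

section
/- For every s ≥ 1, the Gelfand invariant g_s = tr(E^s) is a central element of the universal enveloping algebra U(gl_n); that is, g_s commutes with the image of every basis element E_ij. -/
/-!
The commutation relations `[E_ij, E_kl] = δ_jk E_il - δ_li E_kj` say precisely that the matrix
`E_ij • 1 - e_ji` (with `e_ji` the matrix unit) commutes with `E`, hence with every power `E^s`.
Taking the trace of that commutation, the `e_ji` terms contribute `(E^s)_ij - (E^s)_ij = 0`,
and what remains is `E_ij tr(E^s) - tr(E^s) E_ij = 0`.
-/

noncomputable section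

attribute [local instance 100] LieRing.ofAssociativeRing

/-- The Gelfand invariant `g_s = tr (E^s)`. -/
noncomputable def gelfand (n s : ℕ) : glUEA n := Matrix.trace (Emat n ^ s)

open Matrix

theorem Matrix.commute_trace_of_commute_scalar_sub_single {R m : Type*} [Ring R] [Fintype m]
    [DecidableEq m] {a : R} {i j : m} {N : Matrix m m R}
    (h : Commute (scalar m a - single j i 1) N) : Commute a N.trace := by
  have htr := congrArg trace h.eq
  simp only [sub_mul, mul_sub, trace_sub, trace_single_mul, trace_mul_single, one_smul,
    MulOpposite.op_one, scalar_apply, ← smul_eq_diagonal_mul, ← op_smul_eq_mul_diagonal,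
    trace_smul, smul_eq_mul, MulOpposite.smul_eq_mul_unop, MulOpposite.unop_op, one_mul,
    sub_left_inj] at htr
  exact htr

theorem Egen_mul_sub_mul_Egen {n : ℕ} (i j k l : Fin n) :
    Egen n i j * Egen n k l - Egen n k l * Egen n i j =
      (if j = k then Egen n i l else 0) - (if l = i then Egen n k j else 0) := by
  have hsingle : ∀ {a b c d : Fin n}, (single a b 1 * single c d 1 : Matrix (Fin n) (Fin n) ℂ) =
      if b = c then single a d 1 else 0 := by
    intro a b c d
    split_ifs with hbc
    · rw [hbc, single_mul_single_same, one_mul]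
    · exact single_mul_single_of_ne _ _ _ _ hbc _
  rw [Egen, Egen, ← Ring.lie_def, ← LieHom.map_lie, Ring.lie_def, map_sub, hsingle, hsingle]
  simp only [apply_ite (UniversalEnvelopingAlgebra.ι ℂ), map_zero, Egen]

theorem commute_scalar_Egen_sub_single_Emat {n : ℕ} (i j : Fin n) :
    Commute (scalar (Fin n) (Egen n i j) - single j i 1) (Emat n) := by
  rw [commute_iff_eq, sub_mul, mul_sub, sub_eq_sub_iff_sub_eq_sub]
  refine Matrix.ext fun k l => ?_
  simp only [Matrix.sub_apply, scalar_apply, diagonal_mul, mul_diagonal]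
  rw [Emat, of_apply, Egen_mul_sub_mul_Egen]
  simp [Matrix.mul_apply, single, ite_and, eq_comm]

theorem stmt2_general (n s : ℕ) (i j : Fin n) :
    gelfand n s * Egen n i j = Egen n i j * gelfand n s :=
  (commute_trace_of_commute_scalar_sub_single
    ((commute_scalar_Egen_sub_single_Emat i j).pow_right s)).eq.symm

theorem stmt2 (n s : ℕ) (hs : 1 ≤ s) (i j : Fin n) :
    gelfand n s * Egen n i j = Egen n i j * gelfand n s :=
  stmt2_general n s i j
end
end

section
/- Let m ≥ 2 and for 1 ≤ a < b ≤ m set R_ab = id − (b−a)^{−1} P_ab ∈ End(V^{⊗m}). Then the ordered product (R_{m−1,m})·(R_{m−2,m} R_{m−2,m−1})·⋯·(R_{1,m} R_{1,m−1} ⋯ R_{1,2}) equals the antisymmetrizer A_m. (This is the evaluation of the fused R-matrix R(u_1,…,u_m) with R_ij = R_ij(u_i − u_j) at the points u_i = u − i + 1, for which u_i − u_j = j − i.) -/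
noncomputable section

/-- Model of `V^{⊗m}` for `V = ℂ^n`: functions on `m`-tuples of basis indices. -/
abbrev Wt (n m : ℕ) : Type := (Fin m → Fin n) → ℂ

/-- The operator transposing the `a`-th and `b`-th tensor factors:
`(P_{ab} g)(t) = g(t ∘ swap a b)`. -/
noncomputable def Pop (n m : ℕ) (a b : Fin m) : Module.End ℂ (Wt n m) :=
  LinearMap.funLeft ℂ ℂ fun t => t ∘ (Equiv.swap a b)

/-- `R_{ab} = id − (b−a)⁻¹ P_{ab}`. -/
noncomputable def Rop (n m : ℕ) (a b : Fin m) : Module.End ℂ (Wt n m) :=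
  1 - (((b : ℕ) : ℂ) - ((a : ℕ) : ℂ))⁻¹ • Pop n m a b

/-- The antisymmetrizer `A_m`, acting on coordinates by
`(A g)(t) = Σ_σ sgn σ · g(t ∘ σ)`. -/
noncomputable def Asym (n m : ℕ) : Module.End ℂ (Wt n m) :=
  ∑ σ : Equiv.Perm (Fin m),
    ((Equiv.Perm.sign σ : ℤ) : ℂ) • LinearMap.funLeft ℂ ℂ (fun t => t ∘ σ)

/-- The ordered product `(R_{m−1,m})·(R_{m−2,m} R_{m−2,m−1})⋯(R_{1,m} ⋯ R_{1,2})`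
(in 1-based labels; here indices are 0-based, with the outer index descending and,
for each fixed first index `a`, the second index descending from `m−1` to `a+1`). -/
noncomputable def fusedR (n m : ℕ) : Module.End ℂ (Wt n m) :=
  (((List.finRange m).reverse.flatMap fun a =>
      (((List.finRange m).reverse.filter fun b => a < b).map fun b => Rop n m a b)).prod)

/-!
Let `F a` be the signed sum of `ρ σ` over the permutations `σ` fixing `0, …, a - 1`, so that
`F 0` is the antisymmetrizer and `F m = 1`. For such `σ`, `F a * ρ σ = sgn σ • F a`; as
`(a b)(a k) = (b k)(a b)`, this gives `F (a + 1) P_ab P_ak = -F (a + 1) P_ab` for distinct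
`b, k > a`. With it, left multiplication by `F (a + 1)` telescopes the row
`R_{a,m-1} ⋯ R_{a,a+1}` to `F (a + 1) (1 - ∑_{b > a} P_ab)`, which is `F a` because the
transpositions `(a b)`, `b ≥ a`, represent the cosets of the stabilizer of `a`. So the product
of the rows, read from the left, runs through `F m, F (m - 1), …, F 0`. Nothing but the
relations of `S_m` is used, so the identity holds in any representation over a field of
characteristic zero.
-/

open Equiv Equiv.Perm Finset

abbrev fixBelow (m a : ℕ) : Subgroup (Perm (Fin m)) :=
  fixingSubgroup (Perm (Fin m)) {i : Fin m | (i : ℕ) < a}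

section FixBelow

variable {m : ℕ}

lemma mem_fixBelow {a : ℕ} {σ : Perm (Fin m)} :
    σ ∈ fixBelow m a ↔ ∀ i : Fin m, (i : ℕ) < a → σ i = i := by
  simp [mem_fixingSubgroup_iff, Perm.smul_def]

lemma fixBelow_zero : fixBelow m 0 = ⊤ := by
  ext σ; simp [mem_fixBelow]

lemma fixBelow_of_le {a : ℕ} (h : m ≤ a) : fixBelow m a = ⊥ := by
  ext σ
  simp only [mem_fixBelow, Subgroup.mem_bot, Perm.ext_iff, Perm.one_apply]
  exact ⟨fun hσ i => hσ i (by omega), fun hσ i _ => hσ i⟩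

lemma mem_fixBelow_succ {a : Fin m} {σ : Perm (Fin m)} :
    σ ∈ fixBelow m (a + 1) ↔ σ ∈ fixBelow m a ∧ σ a = a := by
  simp only [mem_fixBelow]
  refine ⟨fun hσ => ⟨fun i hi => hσ i (by omega), hσ a (by omega)⟩, fun ⟨hσ, ha⟩ i hi => ?_⟩
  rcases (Nat.lt_succ_iff_lt_or_eq.mp hi) with hi | hi
  · exact hσ i hi
  · rwa [Fin.ext hi]

lemma swap_mem_fixBelow {a : ℕ} {i j : Fin m} (hi : a ≤ i) (hj : a ≤ j) :
    swap i j ∈ fixBelow m a :=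
  mem_fixBelow.mpr fun k hk =>
    swap_apply_of_ne_of_ne (fun h => by subst h; omega) (fun h => by subst h; omega)

lemma le_apply_of_mem_fixBelow {a : ℕ} {σ : Perm (Fin m)} (hσ : σ ∈ fixBelow m a) {j : Fin m}
    (hj : a ≤ j) : a ≤ σ j := by
  by_contra! h
  have : σ (σ j) = σ j := mem_fixBelow.mp hσ _ h
  rw [σ.injective this] at h
  omega

end FixBelow

section PartialAntisymmetrizer

variable {A : Type*} [Ring A] {m : ℕ} (ρ : Perm (Fin m) →* A)

open scoped Classical in
def partialAntisymmetrizer (a : ℕ) : A :=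
  ∑ σ ∈ univ.filter (· ∈ fixBelow m a), (sign σ : ℤ) • ρ σ

lemma partialAntisymmetrizer_zero :
    partialAntisymmetrizer ρ 0 = ∑ σ, (sign σ : ℤ) • ρ σ := by
  simp [partialAntisymmetrizer, fixBelow_zero]

lemma partialAntisymmetrizer_of_le {a : ℕ} (h : m ≤ a) : partialAntisymmetrizer ρ a = 1 := by
  classical
  simp [partialAntisymmetrizer, fixBelow_of_le h, Finset.filter_eq']

lemma partialAntisymmetrizer_mul_of_mem {a : ℕ} {τ : Perm (Fin m)} (hτ : τ ∈ fixBelow m a) :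
    partialAntisymmetrizer ρ a * ρ τ = (sign τ : ℤ) • partialAntisymmetrizer ρ a := by
  classical
  simp only [partialAntisymmetrizer, Finset.sum_mul, Finset.smul_sum, smul_mul_assoc, ← map_mul]
  refine Finset.sum_equiv (Equiv.mulRight τ) (by simp [Subgroup.mul_mem_cancel_right _ hτ])
    fun σ _ => ?_
  rw [Equiv.coe_mulRight, Perm.sign_mul, smul_smul, ← Units.val_mul, mul_comm (sign σ),
    ← mul_assoc, Int.units_mul_self, one_mul]

lemma partialAntisymmetrizer_mul_swap_mul_swap {a b k : Fin m} (hab : a < b) (hak : a < k)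
    (hbk : b ≠ k) :
    partialAntisymmetrizer ρ (a + 1) * ρ (swap a b) * ρ (swap a k) =
      -(partialAntisymmetrizer ρ (a + 1) * ρ (swap a b)) := by
  have hconj := swap_apply_apply (swap a b) a k
  rw [swap_apply_left, swap_apply_of_ne_of_ne hak.ne' hbk.symm] at hconj
  have hcomm : swap a b * swap a k = swap b k * swap a b := by
    rw [hconj, inv_mul_cancel_right]
  rw [mul_assoc, ← map_mul, hcomm, map_mul, ← mul_assoc,
    partialAntisymmetrizer_mul_of_mem ρ (swap_mem_fixBelow (Fin.lt_def.mp hab) (Fin.lt_def.mp hak)),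
    sign_swap hbk, smul_mul_assoc, Units.val_neg, Units.val_one, neg_one_zsmul]

/-- Every `σ` fixing the indices `< a` factors uniquely as `τ * swap a b` with `τ` also fixing `a`
and `b = σ⁻¹ a ≥ a`. -/
lemma sum_sign_swap_smul_partialAntisymmetrizer_mul_swap (a : Fin m) :
    ∑ b ∈ Ici a, (sign (swap a b) : ℤ) • (partialAntisymmetrizer ρ (a + 1) * ρ (swap a b)) =
      partialAntisymmetrizer ρ a := by
  classical
  simp only [partialAntisymmetrizer, Finset.sum_mul, Finset.smul_sum, smul_mul_assoc, ← map_mul,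
    smul_smul]
  rw [← Finset.sum_product']
  refine Finset.sum_nbij' (fun p => p.2 * swap a p.1) (fun σ => (σ⁻¹ a, σ * swap a (σ⁻¹ a)))
    ?_ ?_ ?_ ?_ ?_
  · rintro ⟨b, τ⟩ hbτ
    simp only [mem_product, mem_Ici, mem_filter, mem_univ, true_and, mem_fixBelow_succ] at hbτ ⊢
    exact mul_mem hbτ.2.1 (swap_mem_fixBelow le_rfl (Fin.le_def.mp hbτ.1))
  · intro σ hσ
    simp only [mem_filter, mem_univ, true_and] at hσ
    have hle : (a : ℕ) ≤ σ⁻¹ a := le_apply_of_mem_fixBelow (inv_mem hσ) le_rfl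
    simp only [mem_product, mem_Ici, mem_filter, mem_univ, true_and, mem_fixBelow_succ]
    exact ⟨Fin.le_def.mpr hle, mul_mem hσ (swap_mem_fixBelow le_rfl hle), by simp⟩
  · rintro ⟨b, τ⟩ hbτ
    simp only [mem_product, mem_filter, mem_univ, true_and, mem_fixBelow_succ] at hbτ
    have hb : (τ * swap a b)⁻¹ a = b := by
      rw [mul_inv_rev, swap_inv, Perm.mul_apply, Perm.inv_eq_iff_eq.mpr hbτ.2.2.symm,
        swap_apply_left]
    simp only [hb, mul_swap_mul_self]
  · intro σ _
    exact mul_swap_mul_self _ _ σ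
  · rintro ⟨b, τ⟩ _
    rw [Perm.sign_mul, Units.val_mul, mul_comm]

lemma partialAntisymmetrizer_succ_mul_one_sub_sum_swap (a : Fin m) :
    partialAntisymmetrizer ρ (a + 1) * (1 - ∑ b ∈ Ioi a, ρ (swap a b)) =
      partialAntisymmetrizer ρ a := by
  rw [← sum_sign_swap_smul_partialAntisymmetrizer_mul_swap, ← Ioi_insert, sum_insert (by simp),
    swap_self, ← Perm.one_def, map_one, map_one, mul_one, Units.val_one, one_smul, mul_sub,
    mul_one, Finset.mul_sum, sub_eq_add_neg, ← sum_neg_distrib]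
  refine congrArg _ (sum_congr rfl fun b hb => ?_)
  rw [sign_swap (mem_Ioi.mp hb).ne, Units.val_neg, Units.val_one, neg_one_zsmul]

end PartialAntisymmetrizer

def finRangeFrom (m k : ℕ) : List (Fin m) :=
  (List.finRange m).filter fun b => k ≤ (b : ℕ)

section FinRangeFrom

variable {m : ℕ}

lemma finRangeFrom_zero : finRangeFrom m 0 = List.finRange m :=
  List.filter_eq_self.mpr fun _ _ => by simp

lemma finRangeFrom_of_le {k : ℕ} (h : m ≤ k) : finRangeFrom m k = [] :=
  List.filter_eq_nil_iff.mpr fun b _ => by simp only [decide_eq_true_eq]; omega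

lemma finRangeFrom_eq_cons {k : ℕ} (h : k < m) :
    finRangeFrom m k = ⟨k, h⟩ :: finRangeFrom m (k + 1) := by
  have hsorted (j : ℕ) : (finRangeFrom m j).Pairwise (· < ·) :=
    (List.pairwise_lt_finRange m).filter _
  refine (hsorted k).eq_of_mem_iff (List.pairwise_cons.mpr ⟨fun b hb => ?_, hsorted _⟩)
    fun b => ?_
  · simp only [finRangeFrom, List.mem_filter, decide_eq_true_eq] at hb
    exact Fin.lt_def.mpr hb.2
  · simp only [finRangeFrom, List.mem_cons, List.mem_filter, List.mem_finRange, true_and,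
      decide_eq_true_eq, Fin.ext_iff]
    omega

lemma reverse_finRange_filter_lt (a : Fin m) :
    (List.finRange m).reverse.filter (a < ·) = (finRangeFrom m (a + 1)).reverse := by
  rw [List.filter_reverse, finRangeFrom]
  congr 1

lemma sum_map_finRangeFrom_succ {M : Type*} [AddCommMonoid M] (a : Fin m) (f : Fin m → M) :
    ((finRangeFrom m (a + 1)).map f).sum = ∑ b ∈ Ioi a, f b := by
  classical
  rw [finRangeFrom, ← List.sum_toFinset _ ((List.nodup_finRange m).filter _)]
  congr 1
  ext b
  simp

end FinRangeFrom

lemma mul_one_sub_smul_mul_one_sub_smul {𝕜 A : Type*} [Field 𝕜] [Ring A] [Algebra 𝕜 A]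
    {G S P : A} {c : 𝕜} (hc : c ≠ 0) (hc1 : c + 1 ≠ 0) (h : G * S * P = -(G * S)) :
    G * (1 - (c + 1)⁻¹ • S) * (1 - c⁻¹ • P) = G * (1 - c⁻¹ • (P + S)) := by
  have key : c⁻¹ = (c + 1)⁻¹ + (c + 1)⁻¹ * c⁻¹ := by field_simp
  simp only [mul_sub, sub_mul, mul_one, mul_smul_comm, smul_mul_assoc, h, smul_add, mul_add]
  linear_combination (norm := module) key • (G * S)

section FusedR

variable (𝕜 : Type*) {A : Type*} [Field 𝕜] [CharZero 𝕜] [Ring A] [Algebra 𝕜 A] {m : ℕ}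
  (ρ : Perm (Fin m) →* A)

def rFactor (a b : Fin m) : A :=
  1 - (((b : ℕ) : 𝕜) - ((a : ℕ) : 𝕜))⁻¹ • ρ (swap a b)

lemma partialAntisymmetrizer_succ_mul_prod_rFactor_finRangeFrom {a : Fin m} {k : ℕ}
    (hak : (a : ℕ) < k) (hkm : k ≤ m) :
    partialAntisymmetrizer ρ (a + 1) * ((finRangeFrom m k).reverse.map (rFactor 𝕜 ρ a)).prod =
      partialAntisymmetrizer ρ (a + 1) *
        (1 - ((k : 𝕜) - a)⁻¹ • ((finRangeFrom m k).map fun b => ρ (swap a b)).sum) := by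
  induction hkm using Nat.decreasingInduction with
  | self => simp [finRangeFrom_of_le le_rfl]
  | of_succ k hk ih =>
    set G := partialAntisymmetrizer ρ (a + 1)
    set S := ((finRangeFrom m (k + 1)).map fun b => ρ (swap a b)).sum
    have hGSP : G * S * ρ (swap a ⟨k, hk⟩) = -(G * S) := by
      simp only [S, ← List.sum_map_mul_left, ← List.sum_map_mul_right, List.sum_neg, List.map_map]
      congr 1
      refine List.map_congr_left fun b hb => ?_
      simp only [finRangeFrom, List.mem_filter, decide_eq_true_eq] at hb
      exact partialAntisymmetrizer_mul_swap_mul_swap ρ (Fin.lt_def.mpr (by omega))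
        (Fin.lt_def.mpr hak) (Fin.ne_of_val_ne (by dsimp only; omega))
    have hc : (k : 𝕜) - a ≠ 0 := sub_ne_zero.mpr (by exact_mod_cast hak.ne')
    have hc1 : (k : 𝕜) - a + 1 ≠ 0 := by
      rw [sub_add_eq_add_sub, sub_ne_zero]; exact_mod_cast (by omega : k + 1 ≠ a)
    rw [finRangeFrom_eq_cons hk, List.reverse_cons, List.map_append, List.prod_append,
      ← mul_assoc, ih (by omega), List.map_singleton, List.prod_singleton, List.map_cons,
      List.sum_cons, Nat.cast_add_one, add_sub_right_comm]
    exact mul_one_sub_smul_mul_one_sub_smul hc hc1 hGSP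

lemma partialAntisymmetrizer_succ_mul_prod_rFactor (a : Fin m) :
    partialAntisymmetrizer ρ (a + 1) *
        (((List.finRange m).reverse.filter (a < ·)).map (rFactor 𝕜 ρ a)).prod =
      partialAntisymmetrizer ρ a := by
  rw [reverse_finRange_filter_lt, partialAntisymmetrizer_succ_mul_prod_rFactor_finRangeFrom 𝕜 ρ
    (Nat.lt_succ_self _) a.isLt, Nat.cast_add_one, add_sub_cancel_left, inv_one, one_smul,
    sum_map_finRangeFrom_succ, partialAntisymmetrizer_succ_mul_one_sub_sum_swap]

lemma prod_map_prod_rFactor_finRangeFrom {k : ℕ} (hk : k ≤ m) :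
    ((finRangeFrom m k).reverse.map fun a =>
        (((List.finRange m).reverse.filter (a < ·)).map (rFactor 𝕜 ρ a)).prod).prod =
      partialAntisymmetrizer ρ k := by
  induction hk using Nat.decreasingInduction with
  | self => simp [finRangeFrom_of_le le_rfl, partialAntisymmetrizer_of_le ρ le_rfl]
  | of_succ k hk ih =>
    rw [finRangeFrom_eq_cons hk, List.reverse_cons, List.map_append, List.prod_append, ih,
      List.map_singleton, List.prod_singleton]
    exact partialAntisymmetrizer_succ_mul_prod_rFactor 𝕜 ρ ⟨k, hk⟩

theorem prod_flatMap_rFactor_eq_sum_sign_smul :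
    ((List.finRange m).reverse.flatMap fun a =>
        ((List.finRange m).reverse.filter (a < ·)).map (rFactor 𝕜 ρ a)).prod =
      ∑ σ, (sign σ : ℤ) • ρ σ := by
  have h := prod_map_prod_rFactor_finRangeFrom 𝕜 ρ (Nat.zero_le m)
  rw [finRangeFrom_zero, partialAntisymmetrizer_zero] at h
  rwa [List.flatMap_def, List.prod_flatten, List.map_map]

end FusedR

def permRep (n m : ℕ) : Perm (Fin m) →* Module.End ℂ (Wt n m) where
  toFun σ := LinearMap.funLeft ℂ ℂ (· ∘ σ)
  map_one' := rfl
  map_mul' _ _ := rfl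

theorem stmt4_general (n m : ℕ) :
    fusedR n m = Asym n m := by
  have hA : Asym n m = ∑ σ, (sign σ : ℤ) • permRep n m σ :=
    sum_congr rfl fun σ _ => Int.cast_smul_eq_zsmul ℂ (sign σ : ℤ) (permRep n m σ)
  rw [hA, ← prod_flatMap_rFactor_eq_sum_sign_smul ℂ]
  rfl

theorem stmt4 (n m : ℕ) (hn : 1 ≤ n) (hm : 2 ≤ m) :
    fusedR n m = Asym n m :=
  stmt4_general n m
end
end

section
/- For every permutation ρ ∈ S_n and every u ∈ ℂ, the Capelli determinant satisfies both the column expansion sgn ρ · Σ_{σ ∈ S_n} sgn σ · (u + E)_{σ(1),ρ(1)} ((u−1) + E)_{σ(2),ρ(2)} ⋯ ((u−n+1) + E)_{σ(n),ρ(n)} = C(u) and the row expansion sgn ρ · Σ_{σ ∈ S_n} sgn σ · ((u−n+1) + E)_{ρ(1),σ(1)} ((u−n+2) + E)_{ρ(2),σ(2)} ⋯ (u + E)_{ρ(n),σ(n)} = C(u). (This is the image in U(gl_n), under the evaluation of the Yangian, of the permutation formulas for the quantum determinant.) -/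
noncomputable section

attribute [local instance 100] LieRing.ofAssociativeRing

/-- The entry `(w + E)_{ij} = δ_ij · w + E_ij`. -/
noncomputable def capelliEntry (n : ℕ) (w : ℂ) (i j : Fin n) : glUEA n :=
  (if i = j then algebraMap ℂ (glUEA n) w else 0) + Egen n i j

/-- The Capelli determinant
`C(u) = Σ_σ sgn σ · (u+E)_{σ(1),1} ((u−1)+E)_{σ(2),2} ⋯ ((u−n+1)+E)_{σ(n),n}`
(columns indexed 0-based, the product taken in the written order). -/
noncomputable def capelli (n : ℕ) (u : ℂ) : glUEA n :=
  ∑ σ : Equiv.Perm (Fin n), (Equiv.Perm.sign σ : ℤ) •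
    (((List.finRange n).map fun (k : Fin n) => capelliEntry n (u - (k : ℕ)) (σ k) k).prod)

/-!
Write `T(v)` for the matrix `v + E`. At two adjacent positions of a product of entries, the
commutation relations of `gl_n` give two-term identities: for parameters `v, v - 1`, symmetrizing
over the two columns gives an expression symmetric in the two rows; for `v, v + 1`, symmetrizing
over the rows gives one symmetric in the columns (the Yangian relation at `u - v = ±1`). Pairing
`σ` with `σ * swap i (i+1)` then shows that the column expansion with the descending parameters
`u, u - 1, …` changes sign under adjacent transpositions of its columns, and the row expansion
with the ascending parameters `u - n + 1, …, u` under adjacent transpositions of its rows; adjacent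
transpositions generate `S_n`, so `ρ` only contributes `sgn ρ`.

It remains to identify the row expansion at `ρ = 1` with `C(u)`. The doubly alternating sum
`Σ_{σ,τ} sgn σ sgn τ ∏_k T(w_k)_{σ(k),τ(k)}` is `n!` times the column expansion for descending `w`
and `n!` times the row expansion for ascending `w`. It is invariant under permutations of the
parameters, since `T(v)_{ap} T(v')_{bq} + T(v)_{bq} T(v')_{ap}` is symmetric in `v, v'` whatever the
commutation relations; reversing the parameters turns the descending ones into the ascending ones.
-/

open Equiv Equiv.Perm

lemma Matrix.single_one_mul_single_one_s5 {ι α : Type*} [Fintype ι] [DecidableEq ι] [Semiring α]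
    (a b c d : ι) :
    Matrix.single a b (1 : α) * Matrix.single c d 1
      = if c = b then Matrix.single a d 1 else 0 := by
  split_ifs with h
  · subst h; simp
  · exact Matrix.single_mul_single_of_ne (h := Ne.symm h) ..

lemma Fintype.sum_eq_zero_of_mul_right_eq_neg {G M : Type*} [Group G] [Fintype G]
    [AddCommGroup M] {t : G} (ht : t ≠ 1) (htt : t * t = 1) (f : G → M)
    (hf : ∀ g, f (g * t) = -f g) : ∑ g, f g = 0 :=
  Finset.sum_ninvolution (· * t) (fun g => by rw [hf, add_neg_cancel])
    (fun g _ => by simpa using ht) (fun _ => Finset.mem_univ _)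
    (fun g => by rw [mul_assoc, htt, mul_one])

lemma Equiv.Perm.sign_mul_swap_coe {α : Type*} [DecidableEq α] [Fintype α] {i j : α}
    (hij : i ≠ j) (σ : Perm α) : ((sign (σ * swap i j) : ℤˣ) : ℤ) = -sign σ := by
  simp [sign_mul, sign_swap hij]

section Adjacent

variable {n : ℕ}

lemma Fin.ne_of_val_eq_add_one {i j : Fin n} (hj : (j : ℕ) = i + 1) : i ≠ j :=
  fun h => by simp [h] at hj

lemma exists_prod_map_finRange_eq_mul_mul {R : Type*} [Monoid R] (f : Fin n → R) {i j : Fin n}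
    (hj : (j : ℕ) = i + 1) :
    ∃ A B : R, ∀ g : Fin n → R, (∀ k, k ≠ i → k ≠ j → g k = f k) →
      ((List.finRange n).map g).prod = A * (g i * g j) * B := by
  set l := List.finRange n
  have hsplit : l = l.take i ++ i :: j :: l.drop (i + 2) := by
    have hi : (i : ℕ) < l.length := by simp [l]
    have hi' : (i : ℕ) + 1 < l.length := by simp [l]; omega
    conv_lhs => rw [← List.take_append_drop i l, List.drop_eq_getElem_cons hi,
      List.drop_eq_getElem_cons hi']
    congr 3 <;> ext <;> simp [l, hj]
  refine ⟨((l.take i).map f).prod, ((l.drop (i + 2)).map f).prod, fun g hg => ?_⟩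
  have hoff : ∀ k ∈ l.take i ++ l.drop (i + 2), g k = f k := by
    intro k hk
    have : (k : ℕ) < i ∨ (i : ℕ) + 2 ≤ k := by
      rcases List.mem_append.1 hk with hk | hk
      · obtain ⟨m, hm, rfl⟩ := List.mem_take_iff_getElem.1 hk
        simp only [l, List.getElem_finRange, Fin.val_cast]; omega
      · obtain ⟨m, hm, rfl⟩ := List.mem_drop_iff_getElem.1 hk
        simp only [l, List.getElem_finRange, Fin.val_cast]; omega
    exact hg k (fun h => by subst h; omega) (fun h => by subst h; omega)
  conv_lhs => rw [hsplit]
  rw [List.map_append, List.map_cons, List.map_cons, List.prod_append, List.prod_cons,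
    List.prod_cons, List.map_congr_left fun k hk => hoff k (List.mem_append_left _ hk),
    List.map_congr_left fun k hk => hoff k (List.mem_append_right _ hk), mul_assoc, mul_assoc]

lemma prod_map_finRange_add_eq_of_adjacent {R : Type*} [Semiring R] {i j : Fin n}
    (hj : (j : ℕ) = i + 1) (f₁ f₂ g₁ g₂ : Fin n → R)
    (hoff : ∀ k, k ≠ i → k ≠ j → f₂ k = f₁ k ∧ g₁ k = f₁ k ∧ g₂ k = f₁ k)
    (h : f₁ i * f₁ j + f₂ i * f₂ j = g₁ i * g₁ j + g₂ i * g₂ j) :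
    ((List.finRange n).map f₁).prod + ((List.finRange n).map f₂).prod
      = ((List.finRange n).map g₁).prod + ((List.finRange n).map g₂).prod := by
  obtain ⟨A, B, hAB⟩ := exists_prod_map_finRange_eq_mul_mul f₁ hj
  rw [hAB f₁ fun _ _ _ => rfl, hAB f₂ fun k hi hj => (hoff k hi hj).1,
    hAB g₁ fun k hi hj => (hoff k hi hj).2.1, hAB g₂ fun k hi hj => (hoff k hi hj).2.2,
    ← add_mul, ← mul_add, h, mul_add, add_mul]

lemma Equiv.Perm.eq_apply_one_of_mul_swap_adjacent {M : Type*} (f : Perm (Fin n) → M)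
    (hf : ∀ ρ (i j : Fin n), (j : ℕ) = i + 1 → f (ρ * swap i j) = f ρ) (ρ : Perm (Fin n)) :
    f ρ = f 1 := by
  cases n with
  | zero => rw [Subsingleton.elim ρ 1]
  | succ m =>
    have hρ : ρ ∈ Submonoid.closure (Set.range fun i : Fin m ↦ swap i.castSucc i.succ) := by
      rw [mclosure_swap_castSucc_succ]; trivial
    suffices ∀ σ, f (σ * ρ) = f σ by simpa using this 1
    induction hρ using Submonoid.closure_induction with
    | mem _ h =>
      obtain ⟨i, rfl⟩ := h
      exact fun σ => hf σ _ _ (by simp)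
    | one => simp
    | mul _ _ _ _ h₁ h₂ => intro σ; rw [← mul_assoc, h₂, h₁]

end Adjacent

section Entries

variable {n : ℕ}

lemma Egen_mul_Egen (a b c d : Fin n) :
    Egen n a b * Egen n c d = Egen n c d * Egen n a b
      + (if c = b then Egen n a d else 0) - (if a = d then Egen n c b else 0) := by
  have h := (UniversalEnvelopingAlgebra.ι ℂ (L := Matrix (Fin n) (Fin n) ℂ)).map_lie
    (Matrix.single a b 1) (Matrix.single c d 1)
  rw [Ring.lie_def, Ring.lie_def, Matrix.single_one_mul_single_one_s5,
    Matrix.single_one_mul_single_one_s5, map_sub] at h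
  rw [add_sub_assoc, ← sub_eq_iff_eq_add', Egen, Egen, ← h]
  split_ifs <;> simp [Egen]

lemma capelliEntry_eq (w : ℂ) (i j : Fin n) :
    capelliEntry n w i j = (if i = j then w else 0) • (1 : glUEA n) + Egen n i j := by
  rw [capelliEntry, Algebra.algebraMap_eq_smul_one]
  split_ifs <;> simp

lemma capelliEntry_sum_cols_swap_rows (v : ℂ) (a b p q : Fin n) :
    capelliEntry n v a p * capelliEntry n (v - 1) b q
      + capelliEntry n v a q * capelliEntry n (v - 1) b p
    = capelliEntry n v b p * capelliEntry n (v - 1) a q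
      + capelliEntry n v b q * capelliEntry n (v - 1) a p := by
  simp only [capelliEntry_eq, add_mul, mul_add, smul_mul_assoc, mul_smul_comm, one_mul, mul_one]
  rw [Egen_mul_Egen b p a q, Egen_mul_Egen b q a p]
  split_ifs <;> module

lemma capelliEntry_sum_rows_swap_cols (v : ℂ) (a b p q : Fin n) :
    capelliEntry n v a p * capelliEntry n (v + 1) b q
      + capelliEntry n v b p * capelliEntry n (v + 1) a q
    = capelliEntry n v a q * capelliEntry n (v + 1) b p
      + capelliEntry n v b q * capelliEntry n (v + 1) a p := by
  simp only [capelliEntry_eq, add_mul, mul_add, smul_mul_assoc, mul_smul_comm, one_mul, mul_one]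
  rw [Egen_mul_Egen a q b p, Egen_mul_Egen b q a p]
  split_ifs <;> module

lemma capelliEntry_mul_add_mul_swap (v v' : ℂ) (a b p q : Fin n) :
    capelliEntry n v a p * capelliEntry n v' b q + capelliEntry n v b q * capelliEntry n v' a p
    = capelliEntry n v' a p * capelliEntry n v b q
      + capelliEntry n v' b q * capelliEntry n v a p := by
  simp only [capelliEntry_eq, add_mul, mul_add, smul_mul_assoc, mul_smul_comm, one_mul, mul_one]
  split_ifs <;> module

end Entries

section Determinants

variable {n : ℕ}

def entryProd (w : Fin n → ℂ) (r c : Fin n → Fin n) : glUEA n :=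
  ((List.finRange n).map fun k => capelliEntry n (w k) (r k) (c k)).prod

def columnDet (w : Fin n → ℂ) (c : Fin n → Fin n) : glUEA n :=
  ∑ σ : Perm (Fin n), (sign σ : ℤ) • entryProd w σ c

def rowDet (w : Fin n → ℂ) (r : Fin n → Fin n) : glUEA n :=
  ∑ σ : Perm (Fin n), (sign σ : ℤ) • entryProd w r σ

def doubleDet (w : Fin n → ℂ) : glUEA n :=
  ∑ p : Perm (Fin n) × Perm (Fin n), ((sign p.1 : ℤ) * sign p.2) • entryProd w p.1 p.2

def DescendsByOne (w : Fin n → ℂ) : Prop := ∀ i j : Fin n, (j : ℕ) = i + 1 → w j = w i - 1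

def AscendsByOne (w : Fin n → ℂ) : Prop := ∀ i j : Fin n, (j : ℕ) = i + 1 → w j = w i + 1

lemma descendsByOne_sub (u : ℂ) : DescendsByOne fun k : Fin n => u - (k : ℕ) := by
  intro i j hj; dsimp only; rw [hj]; push_cast; ring

lemma ascendsByOne_add (u : ℂ) : AscendsByOne fun k : Fin n => u - (n : ℕ) + 1 + (k : ℕ) := by
  intro i j hj; dsimp only; rw [hj]; push_cast; ring

variable {i j : Fin n} {w : Fin n → ℂ}

lemma entryProd_add_entryProd_comp_swap_of_sub_one (hj : (j : ℕ) = i + 1)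
    (hw : w j = w i - 1) (r c : Fin n → Fin n) :
    entryProd w r c + entryProd w r (c ∘ swap i j)
      = entryProd w (r ∘ swap i j) c + entryProd w (r ∘ swap i j) (c ∘ swap i j) := by
  refine prod_map_finRange_add_eq_of_adjacent hj _ _ _ _
    (fun k hki hkj => by simp [swap_apply_of_ne_of_ne hki hkj]) ?_
  simpa [hw] using capelliEntry_sum_cols_swap_rows (w i) (r i) (r j) (c i) (c j)

lemma entryProd_add_entryProd_comp_swap_of_add_one (hj : (j : ℕ) = i + 1)
    (hw : w j = w i + 1) (r c : Fin n → Fin n) :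
    entryProd w r c + entryProd w (r ∘ swap i j) c
      = entryProd w r (c ∘ swap i j) + entryProd w (r ∘ swap i j) (c ∘ swap i j) := by
  refine prod_map_finRange_add_eq_of_adjacent hj _ _ _ _
    (fun k hki hkj => by simp [swap_apply_of_ne_of_ne hki hkj]) ?_
  simpa [hw] using capelliEntry_sum_rows_swap_cols (w i) (r i) (r j) (c i) (c j)

lemma entryProd_add_entryProd_comp_swap (hj : (j : ℕ) = i + 1) (w : Fin n → ℂ)
    (r c : Fin n → Fin n) :
    entryProd w r c + entryProd w (r ∘ swap i j) (c ∘ swap i j)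
      = entryProd (w ∘ swap i j) r c
        + entryProd (w ∘ swap i j) (r ∘ swap i j) (c ∘ swap i j) := by
  refine prod_map_finRange_add_eq_of_adjacent hj _ _ _ _
    (fun k hki hkj => by simp [swap_apply_of_ne_of_ne hki hkj]) ?_
  simpa using capelliEntry_mul_add_mul_swap (w i) (w j) (r i) (r j) (c i) (c j)

lemma columnDet_comp_swap (hj : (j : ℕ) = i + 1) (hw : w j = w i - 1) (c : Fin n → Fin n) :
    columnDet w (c ∘ swap i j) = -columnDet w c := by
  have hij := Fin.ne_of_val_eq_add_one hj
  have hsum := Fintype.sum_eq_zero_of_mul_right_eq_neg (swap_eq_one_iff.not.2 hij)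
    (swap_mul_self i j)
    (fun σ => (sign σ : ℤ) • (entryProd w σ c + entryProd w σ (c ∘ swap i j))) fun σ => by
      rw [sign_mul_swap_coe hij, coe_mul, ← entryProd_add_entryProd_comp_swap_of_sub_one hj hw,
        neg_smul]
  rw [eq_neg_iff_add_eq_zero, add_comm, ← hsum]
  simp only [columnDet, smul_add, Finset.sum_add_distrib]

lemma rowDet_comp_swap (hj : (j : ℕ) = i + 1) (hw : w j = w i + 1) (r : Fin n → Fin n) :
    rowDet w (r ∘ swap i j) = -rowDet w r := by
  have hij := Fin.ne_of_val_eq_add_one hj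
  have hsum := Fintype.sum_eq_zero_of_mul_right_eq_neg (swap_eq_one_iff.not.2 hij)
    (swap_mul_self i j)
    (fun σ => (sign σ : ℤ) • (entryProd w r σ + entryProd w (r ∘ swap i j) σ)) fun σ => by
      rw [sign_mul_swap_coe hij, coe_mul, ← entryProd_add_entryProd_comp_swap_of_add_one hj hw,
        neg_smul]
  rw [eq_neg_iff_add_eq_zero, add_comm, ← hsum]
  simp only [rowDet, smul_add, Finset.sum_add_distrib]

lemma doubleDet_comp_swap (hj : (j : ℕ) = i + 1) (w : Fin n → ℂ) :
    doubleDet (w ∘ swap i j) = doubleDet w := by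
  have hij := Fin.ne_of_val_eq_add_one hj
  set t : Perm (Fin n) × Perm (Fin n) := (swap i j, swap i j)
  have hreindex : doubleDet (w ∘ swap i j) = ∑ p : Perm (Fin n) × Perm (Fin n),
      ((sign p.1 : ℤ) * sign p.2) •
        entryProd (w ∘ swap i j) ⇑(p.1 * swap i j) ⇑(p.2 * swap i j) := by
    rw [doubleDet, ← Equiv.sum_comp (Equiv.mulRight t)]
    simp [t, hij]
  rw [← sub_eq_zero, hreindex, doubleDet, ← Finset.sum_sub_distrib]
  refine Fintype.sum_eq_zero_of_mul_right_eq_neg (t := t) (by simp [t, swap_eq_one_iff, hij])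
    (by simp [t]) _ fun p => ?_
  simp only [t, Prod.fst_mul, Prod.snd_mul, sign_mul_swap_coe hij, neg_mul_neg, mul_assoc,
    swap_mul_self, mul_one]
  rw [← smul_sub, ← smul_sub, ← smul_neg, neg_sub]
  congr 1
  rw [sub_eq_sub_iff_add_eq_add, coe_mul, coe_mul]
  exact (entryProd_add_entryProd_comp_swap hj w _ _).symm

lemma sign_smul_columnDet (hw : DescendsByOne w) (ρ : Perm (Fin n)) :
    (sign ρ : ℤ) • columnDet w ρ = columnDet w id := by
  simpa using eq_apply_one_of_mul_swap_adjacent (fun ρ => (sign ρ : ℤ) • columnDet w ρ)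
    (fun ρ i j hj => by
      rw [sign_mul_swap_coe (Fin.ne_of_val_eq_add_one hj), coe_mul,
        columnDet_comp_swap hj (hw i j hj), neg_smul_neg]) ρ

lemma sign_smul_rowDet (hw : AscendsByOne w) (ρ : Perm (Fin n)) :
    (sign ρ : ℤ) • rowDet w ρ = rowDet w id := by
  simpa using eq_apply_one_of_mul_swap_adjacent (fun ρ => (sign ρ : ℤ) • rowDet w ρ)
    (fun ρ i j hj => by
      rw [sign_mul_swap_coe (Fin.ne_of_val_eq_add_one hj), coe_mul,
        rowDet_comp_swap hj (hw i j hj), neg_smul_neg]) ρ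

lemma doubleDet_comp_perm (w : Fin n → ℂ) (ρ : Perm (Fin n)) :
    doubleDet (w ∘ ρ) = doubleDet w := by
  simpa using eq_apply_one_of_mul_swap_adjacent (fun ρ => doubleDet (w ∘ ρ))
    (fun ρ i j hj => by rw [coe_mul, ← Function.comp_assoc, doubleDet_comp_swap hj]) ρ

lemma doubleDet_eq_factorial_smul_columnDet (hw : DescendsByOne w) :
    doubleDet w = n.factorial • columnDet w id := by
  calc doubleDet w = ∑ τ : Perm (Fin n), (sign τ : ℤ) • columnDet w τ := by
        simp only [doubleDet, columnDet, Fintype.sum_prod_type_right, Finset.smul_sum, smul_smul,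
          mul_comm]
    _ = n.factorial • columnDet w id := by simp [sign_smul_columnDet hw, Fintype.card_perm]

lemma doubleDet_eq_factorial_smul_rowDet (hw : AscendsByOne w) :
    doubleDet w = n.factorial • rowDet w id := by
  calc doubleDet w = ∑ σ : Perm (Fin n), (sign σ : ℤ) • rowDet w σ := by
        simp only [doubleDet, rowDet, Fintype.sum_prod_type, Finset.smul_sum, smul_smul]
    _ = n.factorial • rowDet w id := by simp [sign_smul_rowDet hw, Fintype.card_perm]

end Determinants

lemma rowDet_ascending_eq_columnDet_descending (n : ℕ) (u : ℂ) :
    rowDet (fun k : Fin n => u - (n : ℕ) + 1 + (k : ℕ)) id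
      = columnDet (fun k : Fin n => u - (k : ℕ)) id := by
  have hrev : (fun k : Fin n => u - (n : ℕ) + 1 + (k : ℕ))
      = (fun k : Fin n => u - (k : ℕ)) ∘ Fin.revPerm := by
    ext k
    simp [Nat.cast_sub (Nat.succ_le_of_lt k.isLt)]
    ring
  apply smul_right_injective (glUEA n)
    (Nat.cast_ne_zero.2 n.factorial_ne_zero : (n.factorial : ℂ) ≠ 0)
  dsimp only
  rw [Nat.cast_smul_eq_nsmul, Nat.cast_smul_eq_nsmul,
    ← doubleDet_eq_factorial_smul_rowDet (ascendsByOne_add u),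
    ← doubleDet_eq_factorial_smul_columnDet (descendsByOne_sub u), hrev, doubleDet_comp_perm]

theorem stmt5 (n : ℕ) (ρ : Equiv.Perm (Fin n)) (u : ℂ) :
    ((Equiv.Perm.sign ρ : ℤ) • ∑ σ : Equiv.Perm (Fin n), (Equiv.Perm.sign σ : ℤ) •
        (((List.finRange n).map fun (k : Fin n) => capelliEntry n (u - (k : ℕ)) (σ k) (ρ k)).prod)
      = capelli n u)
    ∧
    ((Equiv.Perm.sign ρ : ℤ) • ∑ σ : Equiv.Perm (Fin n), (Equiv.Perm.sign σ : ℤ) •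
        (((List.finRange n).map fun (k : Fin n) =>
            capelliEntry n (u - (n : ℕ) + 1 + (k : ℕ)) (ρ k) (σ k)).prod)
      = capelli n u) :=
  ⟨sign_smul_columnDet (descendsByOne_sub u) ρ,
    (sign_smul_rowDet (ascendsByOne_add u) ρ).trans (rowDet_ascending_eq_columnDet_descending n u)⟩
end
end

section
/- Let 1 ≤ m ≤ n and let c_1 < c_2 < ⋯ < c_m and d_1 < d_2 < ⋯ < d_m be indices in {1,…,n}. For u ∈ ℂ define the Capelli minor M(u) = Σ_{σ ∈ S_m} sgn σ · ((u) + E)_{c_{σ(1)},d_1} ((u−1) + E)_{c_{σ(2)},d_2} ⋯ ((u−m+1) + E)_{c_{σ(m)},d_m} ∈ U(gl_n), the product taken in the written order. Then for all 1 ≤ i, j ≤ m and all u ∈ ℂ, the element E_{c_i d_j} commutes with M(u): E_{c_i,d_j} M(u) = M(u) E_{c_i,d_j}. (This is the image in U(gl_n), under the evaluation of the Yangian, of the statement that a quantum minor commutes with the generators t_{c_i d_j}(u).) -/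
noncomputable section

attribute [local instance 100] LieRing.ofAssociativeRing

/-- The Capelli minor
`M(u) = Σ_σ sgn σ · (u+E)_{c_{σ(1)},d_1} ((u−1)+E)_{c_{σ(2)},d_2} ⋯ ((u−m+1)+E)_{c_{σ(m)},d_m}`,
the product taken in the written order. -/
noncomputable def capelliMinorCD (n m : ℕ) (c d : Fin m → Fin n) (u : ℂ) : glUEA n :=
  ∑ σ : Equiv.Perm (Fin m), (Equiv.Perm.sign σ : ℤ) •
    (((List.finRange m).map fun (k : Fin m) =>
        capelliEntry n (u - (k : ℕ)) (c (σ k)) (d k)).prod)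

/-!
Let `E` be the matrix of generators of `U(gl_n)`. The minor `M(u)` is the column-determinant of
the sequence of matrices `u - k + E`, `k = 0, …, m - 1`. Commuting `E_ab` past each ordered product
by the Leibniz rule and using `[E_ab, E_pq] = δ_bp E_aq - δ_qa E_pb`, the commutator `[E_ab, M(u)]`
is the sum over the rows `t` with `c_t = b` of the minor with row `t` replaced by `a`, minus the sum
over the columns `k` with `d_k = a` of the minor with column `k` replaced by `b`.

For `a = c_i` and `b = d_j` the terms `t = i` and `k = j` are both `M(u)` if `c_i = d_j` (and
absent otherwise), and they cancel; every other term is a minor with a repeated row or a repeated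
column. A repeated row kills a column-determinant as usual. A repeated column kills it because the
matrices `w + E` and `w - 1 + E` satisfy the quadratic relation
`(w+E)_ap (w-1+E)_bq + (w+E)_aq (w-1+E)_bp = (w+E)_bp (w-1+E)_aq + (w+E)_bq (w-1+E)_ap`,
so that `M(u)` changes sign when two adjacent columns are swapped.
-/

open Function Equiv

section ListProd
variable {A : Type*} [Ring A]

theorem mul_prod_ofFn_sub_prod_ofFn_mul (x : A) : ∀ {m : ℕ} (g : Fin m → A),
    x * (List.ofFn g).prod - (List.ofFn g).prod * x =
      ∑ k, (List.ofFn (update g k (x * g k - g k * x))).prod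
  | 0, g => by simp
  | m + 1, g => by
    have ih : _ = ∑ k : Fin m,
        (List.ofFn (update (Fin.tail g) k (x * g k.succ - g k.succ * x))).prod :=
      mul_prod_ofFn_sub_prod_ofFn_mul x (Fin.tail g)
    rw [Fin.sum_univ_succ]
    simp only [List.ofFn_succ, List.prod_cons, update_self, ← Fin.tail_def, Fin.tail_update_succ,
      update_of_ne (Fin.succ_ne_zero _), update_of_ne (Fin.succ_ne_zero _).symm]
    rw [← Finset.mul_sum, ← ih]
    noncomm_ring

theorem prod_ofFn_update_ite_sub_ite {m : ℕ} (g : Fin m → A) (k : Fin m) (P Q : Prop)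
    [Decidable P] [Decidable Q] (v w : A) :
    (List.ofFn (update g k ((if P then v else 0) - if Q then w else 0))).prod =
      (if P then (List.ofFn (update g k v)).prod else 0) -
        if Q then (List.ofFn (update g k w)).prod else 0 := by
  simp only [← MultilinearMap.mkPiAlgebraFin_apply (R := ℤ), MultilinearMap.map_update_sub]
  split_ifs <;> simp only [MultilinearMap.map_update_zero]

theorem prod_ofFn_contractNth_castSucc {M : Type*} [Monoid M] {m : ℕ} (g : Fin (m + 1) → M)
    (k : Fin m) : (List.ofFn (k.castSucc.contractNth (· * ·) g)).prod = (List.ofFn g).prod := by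
  have h := congrFun (Fin.partialProd_contractNth g k.castSucc) (Fin.last m)
  have hlast : k.castSucc.succ.succAbove (Fin.last m) = Fin.last (m + 1) := by
    rw [Fin.succAbove_of_le_castSucc] <;> simp [Fin.le_def]
  rw [comp_apply, hlast] at h
  simpa only [Fin.partialProd, Fin.val_last, List.take_of_length_le, List.length_ofFn, le_refl]
    using h

theorem Fin.contractNth_castSucc_eq_update {α : Type*} {m : ℕ} (op : α → α → α)
    {g g₀ : Fin (m + 1) → α} (k : Fin m)
    (h : ∀ i, i ≠ k.castSucc → i ≠ k.succ → g i = g₀ i) :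
    k.castSucc.contractNth op g =
      update (k.castSucc.contractNth op g₀) k (op (g k.castSucc) (g k.succ)) := by
  ext i
  rcases lt_trichotomy (i : ℕ) k with hi | hi | hi
  · rw [update_of_ne (Fin.ne_of_val_ne hi.ne), Fin.contractNth_apply_of_lt _ _ _ _ hi,
      Fin.contractNth_apply_of_lt _ _ _ _ hi]
    exact h _ (by simp [Fin.ext_iff]; omega) (by simp [Fin.ext_iff]; omega)
  · rw [Fin.ext hi, update_self, Fin.contractNth_apply_of_eq _ _ _ _ rfl]
  · rw [update_of_ne (Fin.ne_of_val_ne hi.ne'), Fin.contractNth_apply_of_gt _ _ _ _ hi,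
      Fin.contractNth_apply_of_gt _ _ _ _ hi]
    exact h _ (by simp [Fin.ext_iff]; omega) (by simp [Fin.ext_iff]; omega)

theorem prod_ofFn_eq_toLinearMap_contractNth {m : ℕ} (g₀ g : Fin (m + 1) → A) (k : Fin m)
    (h : ∀ i, i ≠ k.castSucc → i ≠ k.succ → g i = g₀ i) :
    (List.ofFn g).prod = (MultilinearMap.mkPiAlgebraFin ℤ m A).toLinearMap
      (k.castSucc.contractNth (· * ·) g₀) k (g k.castSucc * g k.succ) := by
  rw [MultilinearMap.toLinearMap_apply, MultilinearMap.mkPiAlgebraFin_apply,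
    ← Fin.contractNth_castSucc_eq_update _ k h, prod_ofFn_contractNth_castSucc]

end ListProd

section ColumnDeterminant
variable {ι A : Type*} [Ring A] {m : ℕ}

/-- Column-determinant of the `m × m` matrix whose entry in row `r` and column `k` is
`F k (c r) (d k)`; each column is read off its own matrix `F k`. -/
def cdet (F : Fin m → Matrix ι ι A) (c d : Fin m → ι) : A :=
  ∑ σ : Perm (Fin m), (Perm.sign σ : ℤ) • (List.ofFn fun k => F k (c (σ k)) (d k)).prod

def ColumnAntisymm (X Y : Matrix ι ι A) : Prop :=
  ∀ a b p q, X a p * Y b q - X b p * Y a q = -(X a q * Y b p - X b q * Y a p)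

theorem cdet_eq_zero_of_row_eq (F : Fin m → Matrix ι ι A) {c : Fin m → ι} (d : Fin m → ι)
    {t₁ t₂ : Fin m} (hne : t₁ ≠ t₂) (h : c t₁ = c t₂) : cdet F c d = 0 := by
  refine Finset.sum_ninvolution (swap t₁ t₂ * ·) (fun σ => ?_) (fun σ _ => ?_)
    (fun _ => Finset.mem_univ _) (swap_mul_self_mul t₁ t₂)
  · simp only [Perm.mul_apply, apply_swap_eq_self h, Perm.sign_mul, Perm.sign_swap hne]
    simp
  · rwa [Ne, mul_eq_right, swap_eq_one_iff]

theorem mul_cdet_sub_cdet_mul [DecidableEq ι] (F : Fin m → Matrix ι ι A) (c d : Fin m → ι)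
    {x : A} {a b : ι} (hx : ∀ k p q, x * F k p q - F k p q * x =
      (if b = p then F k a q else 0) - if q = a then F k p b else 0) :
    x * cdet F c d - cdet F c d * x =
      (∑ t, if b = c t then cdet F (update c t a) d else 0) -
        ∑ k, if d k = a then cdet F c (update d k b) else 0 := by
  have hrow (σ : Perm (Fin m)) (k : Fin m) :
      (List.ofFn (update (fun k => F k (c (σ k)) (d k)) k (F k a (d k)))).prod =
        (List.ofFn fun k' => F k' (update c (σ k) a (σ k')) (d k')).prod := by
    congr 2; funext k'
    rcases eq_or_ne k' k with rfl | hk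
    · simp
    · simp [hk, σ.injective.ne hk]
  have hcol (σ : Perm (Fin m)) (k : Fin m) :
      (List.ofFn (update (fun k => F k (c (σ k)) (d k)) k (F k (c (σ k)) b))).prod =
        (List.ofFn fun k' => F k' (c (σ k')) (update d k b k')).prod := by
    congr 2; funext k'
    rcases eq_or_ne k' k with rfl | hk
    · simp
    · simp [hk]
  rw [cdet, Finset.mul_sum, Finset.sum_mul, ← Finset.sum_sub_distrib]
  simp only [mul_smul_comm, smul_mul_assoc, ← smul_sub, mul_prod_ofFn_sub_prod_ofFn_mul, hx,
    prod_ofFn_update_ite_sub_ite, hrow, hcol]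
  simp only [Finset.smul_sum, smul_sub, smul_ite, smul_zero, Finset.sum_sub_distrib]
  rw [Finset.sum_congr rfl fun σ _ => Equiv.sum_comp σ fun t =>
    if b = c t then
      (Perm.sign σ : ℤ) • (List.ofFn fun k => F k (update c t a (σ k)) (d k)).prod
    else 0]
  congr 1 <;> rw [Finset.sum_comm] <;> simp only [Finset.sum_ite_irrel, Finset.sum_const_zero, cdet]

theorem cdet_comp_swap_castSucc_succ (F : Fin (m + 1) → Matrix ι ι A) (k : Fin m)
    (hF : ColumnAntisymm (F k.castSucc) (F k.succ)) (c d : Fin (m + 1) → ι) :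
    cdet F c (d ∘ swap k.castSucc k.succ) = -cdet F c d := by
  set s := swap k.castSucc k.succ
  have hks : k.castSucc ≠ k.succ := (Fin.castSucc_lt_succ (i := k)).ne
  rw [eq_neg_iff_add_eq_zero, add_comm, cdet, cdet, ← Finset.sum_add_distrib]
  -- Pair `σ` with `σ * s`: the four products involved differ only in columns `k` and `k + 1`,
  -- where `hF` makes them cancel.
  refine Finset.sum_ninvolution (· * s) (fun σ => ?_) (fun σ _ => ?_)
    (fun _ => Finset.mem_univ _) (mul_swap_mul_self _ _)
  · set φ := (MultilinearMap.mkPiAlgebraFin ℤ m A).toLinearMap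
      (k.castSucc.contractNth (· * ·) fun i => F i (c (σ i)) (d i)) k
    have hprod (g : Fin (m + 1) → A)
        (hg : ∀ i, i ≠ k.castSucc → i ≠ k.succ → g i = F i (c (σ i)) (d i)) :
        (List.ofFn g).prod = φ (g k.castSucc * g k.succ) :=
      prod_ofFn_eq_toLinearMap_contractNth _ g k hg
    rw [hprod _ fun _ _ _ => rfl, hprod _ ?_, hprod _ ?_, hprod _ ?_]
    · have key := congrArg φ (hF (c (σ k.castSucc)) (c (σ k.succ)) (d k.castSucc) (d k.succ))
      simp only [map_sub, map_neg] at key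
      simp only [Perm.mul_apply, comp_apply, s, swap_apply_left, swap_apply_right, Perm.sign_mul,
        Perm.sign_swap hks]
      push_cast
      linear_combination (norm := module) (Perm.sign σ : ℤ) • key
    all_goals
      intro i h₁ h₂
      simp [s, swap_apply_of_ne_of_ne h₁ h₂]
  · rwa [Ne, mul_eq_left, swap_eq_one_iff]

theorem cdet_eq_zero_of_col_eq [IsAddTorsionFree A] (F : Fin (m + 1) → Matrix ι ι A)
    (hF : ∀ k : Fin m, ColumnAntisymm (F k.castSucc) (F k.succ)) (c : Fin (m + 1) → ι)
    {d : Fin (m + 1) → ι} {t₁ t₂ : Fin (m + 1)} (hne : t₁ ≠ t₂) (h : d t₁ = d t₂) :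
    cdet F c d = 0 := by
  wlog hlt : t₁ < t₂ generalizing t₁ t₂
  · exact this hne.symm h.symm (lt_of_le_of_ne (not_lt.1 hlt) hne.symm)
  induction t₂ using Fin.induction generalizing d with
  | zero => exact absurd hlt (Fin.not_lt_zero t₁)
  | succ k ih =>
    have hswap := cdet_comp_swap_castSucc_succ F k (hF k) c d
    rcases (Fin.le_castSucc_iff.2 hlt).lt_or_eq with hlt' | rfl
    · have h' : d (swap k.castSucc k.succ t₁) = d (swap k.castSucc k.succ k.castSucc) := by
        rw [swap_apply_left, swap_apply_of_ne_of_ne hlt'.ne hlt.ne, h]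
      rwa [ih hlt'.ne h' hlt', eq_comm, neg_eq_zero] at hswap
    · rwa [show d ∘ swap k.castSucc k.succ = d from funext (apply_swap_eq_self h),
        eq_neg_iff_add_eq_zero, ← two_nsmul, two_nsmul_eq_zero] at hswap

end ColumnDeterminant

section GlRelations
variable {ι A : Type*} [DecidableEq ι] [Ring A]

def SatisfiesGlRelations (X : Matrix ι ι A) : Prop :=
  ∀ a b p q, X a b * X p q - X p q * X a b =
    (if b = p then X a q else 0) - if q = a then X p b else 0

theorem commute_diagonal_apply {s : A} (hs : ∀ y, Commute s y) (a b : ι) (y : A) :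
    Commute (Matrix.diagonal (fun _ : ι => s) a b) y := by
  rw [Matrix.diagonal_apply]
  split_ifs
  exacts [hs y, Commute.zero_left y]

variable {X : Matrix ι ι A}

theorem SatisfiesGlRelations.commutator_diagonal_add (hX : SatisfiesGlRelations X) {s : A}
    (hs : ∀ y, Commute s y) (a b p q : ι) :
    let Y : Matrix ι ι A := Matrix.diagonal (fun _ => s) + X
    X a b * Y p q - Y p q * X a b = (if b = p then Y a q else 0) - if q = a then Y p b else 0 := by
  simp only [Matrix.add_apply, mul_add, add_mul, (commute_diagonal_apply hs p q (X a b)).symm.eq]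
  rw [add_sub_add_left_eq_sub, hX]
  simp only [Matrix.diagonal_apply]
  by_cases hbp : b = p <;> by_cases hqa : q = a <;> simp_all [eq_comm]

theorem SatisfiesGlRelations.diagonal_add (hX : SatisfiesGlRelations X) {s : A}
    (hs : ∀ y, Commute s y) : SatisfiesGlRelations (Matrix.diagonal (fun _ => s) + X) := by
  intro a b p q
  refine Eq.trans ?_ (hX.commutator_diagonal_add hs a b p q)
  rw [Matrix.add_apply _ X a b, add_mul, mul_add, (commute_diagonal_apply hs a b _).eq]
  abel

theorem SatisfiesGlRelations.columnAntisymm_sub_one (hX : SatisfiesGlRelations X) :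
    ColumnAntisymm X (X - 1) := by
  intro a b p q
  have h₁ := hX a p b q
  have h₂ := hX a q b p
  simp only [Matrix.sub_apply, Matrix.one_apply, mul_sub, mul_ite, mul_one, mul_zero] at ⊢
  simp only [@eq_comm _ p b, @eq_comm _ q a, @eq_comm _ q b, @eq_comm _ p a] at h₁ h₂ ⊢
  linear_combination (norm := noncomm_ring) h₁ + h₂

theorem SatisfiesGlRelations.commute_cdet [IsAddTorsionFree A] {m : ℕ}
    (hX : SatisfiesGlRelations X) {s : A} (hs : ∀ y, Commute s y) (c d : Fin m → ι)
    (i j : Fin m) :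
    Commute (X (c i) (d j)) (cdet (fun k => Matrix.diagonal (fun _ => s - k) + X) c d) := by
  cases m with
  | zero => exact i.elim0
  | succ m =>
  set F : Fin (m + 1) → Matrix ι ι A := fun k => Matrix.diagonal (fun _ => s - k) + X
  have hsk (k : ℕ) (y : A) : Commute (s - k) y := (hs y).sub_left (Nat.cast_commute k y)
  have hF (k : Fin m) : ColumnAntisymm (F k.castSucc) (F k.succ) := by
    have hshift : F k.succ = F k.castSucc - 1 := by
      ext a b
      simp only [F, Matrix.add_apply, Matrix.sub_apply, Matrix.diagonal_apply, Matrix.one_apply,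
        Fin.val_succ, Fin.val_castSucc, Nat.cast_add, Nat.cast_one]
      split_ifs <;> abel
    rw [hshift]
    exact (hX.diagonal_add (hsk k)).columnAntisymm_sub_one
  have hrow (t : Fin (m + 1)) : (if d j = c t then cdet F (update c t (c i)) d else 0) =
      if t = i then (if d j = c i then cdet F c d else 0) else 0 := by
    rcases eq_or_ne t i with rfl | hti
    · simp
    · rw [if_neg hti, ite_eq_right_iff]
      exact fun _ => cdet_eq_zero_of_row_eq F d hti (by simp [update_of_ne hti.symm])
  have hcol (k : Fin (m + 1)) : (if d k = c i then cdet F c (update d k (d j)) else 0) =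
      if k = j then (if d j = c i then cdet F c d else 0) else 0 := by
    rcases eq_or_ne k j with rfl | hkj
    · simp
    · rw [if_neg hkj, ite_eq_right_iff]
      exact fun _ => cdet_eq_zero_of_col_eq F hF c hkj (by simp [update_of_ne hkj.symm])
  rw [Commute, SemiconjBy, ← sub_eq_zero,
    mul_cdet_sub_cdet_mul F c d fun k => hX.commutator_diagonal_add (hsk k) (c i) (d j)]
  simp only [hrow, hcol, Finset.sum_ite_eq', Finset.mem_univ, if_true, sub_self]

end GlRelations

theorem satisfiesGlRelations_Egen (n : ℕ) : SatisfiesGlRelations (Matrix.of (Egen n)) := by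
  have hsingle (a b p q : Fin n) : Matrix.single a b (1 : ℂ) * Matrix.single p q 1 =
      if b = p then Matrix.single a q 1 else 0 := by
    split_ifs with h
    · rw [h, Matrix.single_mul_single_same, one_mul]
    · exact Matrix.single_mul_single_of_ne (h := h) ..
  intro a b p q
  have h := (UniversalEnvelopingAlgebra.ι ℂ (L := Matrix (Fin n) (Fin n) ℂ)).map_lie
    (Matrix.single a b 1) (Matrix.single p q 1)
  rw [Ring.lie_def, Ring.lie_def, hsingle, hsingle, map_sub,
    apply_ite (UniversalEnvelopingAlgebra.ι ℂ), apply_ite (UniversalEnvelopingAlgebra.ι ℂ),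
    map_zero] at h
  simpa only [Matrix.of_apply, Egen] using h.symm

theorem capelliMinorCD_eq_cdet (n m : ℕ) (c d : Fin m → Fin n) (u : ℂ) :
    capelliMinorCD n m c d u =
      cdet (fun k => Matrix.diagonal (fun _ => algebraMap ℂ (glUEA n) u - k) + Matrix.of (Egen n))
        c d := by
  simp only [capelliMinorCD, cdet, ← List.ofFn_eq_map, capelliEntry, Matrix.add_apply,
    Matrix.diagonal_apply, Matrix.of_apply, map_sub, map_natCast]

theorem stmt8_general (n m : ℕ) (c d : Fin m → Fin n) (i j : Fin m) (u : ℂ) :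
    Egen n (c i) (d j) * capelliMinorCD n m c d u
      = capelliMinorCD n m c d u * Egen n (c i) (d j) := by
  have : IsAddTorsionFree (glUEA n) := .of_isTorsionFree ℂ _
  rw [capelliMinorCD_eq_cdet]
  exact (satisfiesGlRelations_Egen n).commute_cdet (Algebra.commute_algebraMap_left u) c d i j

theorem stmt8 (n m : ℕ) (h1 : 1 ≤ m) (h2 : m ≤ n) (c d : Fin m → Fin n)
    (hc : StrictMono c) (hd : StrictMono d) (i j : Fin m) (u : ℂ) :
    Egen n (c i) (d j) * capelliMinorCD n m c d u
      = capelliMinorCD n m c d u * Egen n (c i) (d j) :=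
  stmt8_general n m c d i j u
end
end

section
/- Cayley–Hamilton theorem for gl_n (first identity): let c_0, c_1, …, c_n ∈ U(gl_n) be the coefficients of the Capelli determinant, so that C(u) = Σ_{j=0}^n c_j u^j for all u ∈ ℂ. Then C(−E + n − 1) = 0, i.e., Σ_{j=0}^n c_j · ((n−1)·1 − E)^j = 0 in the ring of n×n matrices over U(gl_n), where 1 is the identity matrix and c_j acts by entrywise multiplication. -/
/-!
Replace `u` by a central indeterminate `X`. Then `C(X)` is the column determinant of the matrices
`X - k + E` (`k = 0, …, n - 1`), and the commutation relations of `gl_n` give an exchange relation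
between consecutive columns which makes this determinant alternating in its columns. Expanding along
the last column therefore produces a matrix `adj(X)` with `adj(X) (X - M) = C(X) · 1`, where
`M = (n - 1) - E`. Read as a polynomial with matrix coefficients, `C(X) · 1` has the right factor
`X - M`, so its right evaluation `∑ c_j M ^ j` at `M` vanishes.
-/

noncomputable section

attribute [local instance 100] LieRing.ofAssociativeRing

open Polynomial Equiv

namespace List

variable {n : ℕ}

theorem finRange_eq_take_append_cons_cons_drop (k : Fin n) :
    finRange (n + 1) = (finRange (n + 1)).take k ++
      k.castSucc :: k.succ :: (finRange (n + 1)).drop (k + 2) := by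
  have hk : (k : ℕ) < (finRange (n + 1)).length := by simp
  have hk' : (k : ℕ) + 1 < (finRange (n + 1)).length := by simp
  conv_lhs => rw [← take_append_drop k (finRange (n + 1))]
  rw [drop_eq_getElem_cons hk, drop_eq_getElem_cons hk']
  simp [Fin.ext_iff]

theorem map_take_finRange_congr {α : Type*} {g h : Fin (n + 1) → α} (k : Fin n)
    (hgh : ∀ t, t ≠ k.castSucc → t ≠ k.succ → g t = h t) :
    ((finRange (n + 1)).take k).map g = ((finRange (n + 1)).take k).map h := by
  refine map_congr_left fun t ht => hgh t ?_ ?_ <;>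
  · obtain ⟨i, hi, rfl⟩ := mem_take_iff_getElem.mp ht
    simp [Fin.ext_iff]
    omega

theorem map_drop_finRange_congr {α : Type*} {g h : Fin (n + 1) → α} (k : Fin n)
    (hgh : ∀ t, t ≠ k.castSucc → t ≠ k.succ → g t = h t) :
    ((finRange (n + 1)).drop (k + 2)).map g = ((finRange (n + 1)).drop (k + 2)).map h := by
  refine map_congr_left fun t ht => hgh t ?_ ?_ <;>
  · obtain ⟨i, hi, rfl⟩ := mem_drop_iff_getElem.mp ht
    simp [Fin.ext_iff]
    omega

theorem prod_map_finRange_sub_prod_map_finRange {R : Type*} [Ring R] {g h : Fin (n + 1) → R}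
    (k : Fin n) (hgh : ∀ t, t ≠ k.castSucc → t ≠ k.succ → g t = h t) :
    ((finRange (n + 1)).map g).prod - ((finRange (n + 1)).map h).prod =
      (((finRange (n + 1)).take k).map g).prod *
        ((g k.castSucc * g k.succ - h k.castSucc * h k.succ) *
          (((finRange (n + 1)).drop (k + 2)).map g).prod) := by
  conv_lhs => rw [finRange_eq_take_append_cons_cons_drop k]
  simp only [map_append, map_cons, prod_append, prod_cons]
  rw [← map_take_finRange_congr k hgh, ← map_drop_finRange_congr k hgh]
  noncomm_ring

end List

section ColumnDeterminant

variable {A : Type*} [Ring A] {n : ℕ}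

/-- `colDet F c` is the column determinant whose `t`-th column is column `c t` of `F t`;
`capelli n u` is `colDet` of `fun k => (u - k) + E` at `c = id`. -/
def colDet (F : ℕ → Fin n → Fin n → A) (c : Fin n → Fin n) : A :=
  ∑ σ : Perm (Fin n), (Perm.sign σ : ℤ) •
    ((List.finRange n).map fun t : Fin n => F t (σ t) (c t)).prod

/-- The exchange relation between consecutive columns that makes `colDet F` alternating. -/
def CapelliRelation (F : ℕ → Fin n → Fin n → A) : Prop :=
  ∀ (k : ℕ) (r s a b : Fin n),
    F k r a * F (k + 1) s b - F k s b * F (k + 1) r a =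
      F k s a * F (k + 1) r b - F k r b * F (k + 1) s a

theorem capelliRelation_of_commutator {e : Fin n → Fin n → A}
    (he : ∀ i j k l, e i j * e k l - e k l * e i j =
      (if k = j then e i l else 0) - (if i = l then e k j else 0))
    {z : A} (hz : ∀ x, Commute z x) :
    CapelliRelation fun (k : ℕ) i j => (if i = j then z - k else 0) + e i j := by
  intro k r s a b
  have hcast : z - ((k + 1 : ℕ) : A) = z - k - 1 := by push_cast; abel
  simp only [hcast]
  set w := z - k
  have hw : ∀ x, Commute (w - 1) x := fun x =>
    ((hz x).sub_left (Nat.cast_commute k x)).sub_left (Commute.one_left x)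
  have hexp : ∀ i j i' j', ((if i = j then w else 0) + e i j) *
      ((if i' = j' then w - 1 else 0) + e i' j') =
        (if i = j then w else 0) * (if i' = j' then w - 1 else 0) +
          (if i = j then w else 0) * e i' j' + (if i' = j' then w - 1 else 0) * e i j +
            e i j * e i' j' := by
    intro i j i' j'
    have hcomm : Commute (if i' = j' then w - 1 else 0) (e i j) := by
      split_ifs
      exacts [hw _, Commute.zero_left _]
    rw [add_mul, mul_add, mul_add, hcomm.eq]
    abel
  rw [hexp, hexp, hexp, hexp, sub_eq_iff_eq_add.mp (he s b r a), sub_eq_iff_eq_add.mp (he s a r b)]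
  split_ifs <;> noncomm_ring

theorem natDegree_colDet_le {F : ℕ → Fin n → Fin n → A[X]}
    (hF : ∀ k i j, (F k i j).natDegree ≤ 1) (c : Fin n → Fin n) :
    (colDet F c).natDegree ≤ n := by
  refine natDegree_sum_le_of_forall_le _ _ fun σ _ => (natDegree_smul_le _ _).trans ?_
  refine (natDegree_list_prod_le _).trans ((List.sum_le_card_nsmul _ 1 ?_).trans (by simp))
  simp only [List.map_map, List.mem_map, Function.comp_apply]
  rintro _ ⟨t, _, rfl⟩
  exact hF _ _ _

variable {F : ℕ → Fin (n + 1) → Fin (n + 1) → A}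

theorem colDet_comp_swap (hF : CapelliRelation F) (c : Fin (n + 1) → Fin (n + 1)) (k : Fin n) :
    colDet F (c ∘ swap k.castSucc k.succ) = -colDet F c := by
  set τ := swap k.castSucc k.succ
  have hτ : Perm.sign τ = -1 := Perm.sign_swap (Fin.castSucc_lt_succ (i := k)).ne
  have hτ_fix : ∀ t, t ≠ k.castSucc → t ≠ k.succ → τ t = t := fun _ =>
    swap_apply_of_ne_of_ne
  set W : Fin (n + 1) → Fin (n + 1) → A := fun r s =>
    F k r (c k.castSucc) * F (k + 1) s (c k.succ) - F k s (c k.succ) * F (k + 1) r (c k.castSucc)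
  set P : Perm (Fin (n + 1)) → A := fun σ =>
    (((List.finRange (n + 1)).take k).map fun t : Fin _ => F t (σ t) (c t)).prod
  set S : Perm (Fin (n + 1)) → A := fun σ =>
    (((List.finRange (n + 1)).drop (k + 2)).map fun t : Fin _ => F t (σ t) (c t)).prod
  have hterm : ∀ σ : Perm (Fin (n + 1)),
      ((List.finRange (n + 1)).map fun t : Fin _ => F t (σ t) (c t)).prod -
        ((List.finRange (n + 1)).map fun t : Fin _ => F t ((σ * τ) t) ((c ∘ τ) t)).prod =
      P σ * (W (σ k.castSucc) (σ k.succ) * S σ) := fun σ => by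
    rw [List.prod_map_finRange_sub_prod_map_finRange k fun t h h' => by simp [hτ_fix t h h']]
    simp [τ, W, P, S]
  -- the terms of `σ` and `σ * τ` cancel, since `W` is symmetric by `hF`
  have hcancel : ∑ σ : Perm (Fin (n + 1)),
      (Perm.sign σ : ℤ) • (P σ * (W (σ k.castSucc) (σ k.succ) * S σ)) = 0 := by
    have hτ_ne : τ ≠ 1 := fun h => by simp [h] at hτ
    refine Finset.sum_involution (fun σ _ => σ * τ) (fun σ _ => ?_)
      (fun σ _ _ => mt mul_eq_left.mp hτ_ne) (fun _ _ => Finset.mem_univ _)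
      (fun σ _ => by simp [mul_assoc, τ])
    have hP : P (σ * τ) = P σ := congrArg List.prod <|
      List.map_take_finRange_congr k fun t h h' => by simp [hτ_fix t h h']
    have hS : S (σ * τ) = S σ := congrArg List.prod <|
      List.map_drop_finRange_congr k fun t h h' => by simp [hτ_fix t h h']
    have hW : W (σ k.succ) (σ k.castSucc) = W (σ k.castSucc) (σ k.succ) :=
      (hF k (σ k.castSucc) (σ k.succ) (c k.castSucc) (c k.succ)).symm
    simp [hP, hS, Perm.sign_mul, hτ, τ, hW]
  have hreindex : colDet F (c ∘ τ) = -∑ σ : Perm (Fin (n + 1)), (Perm.sign σ : ℤ) •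
      ((List.finRange (n + 1)).map fun t : Fin _ => F t ((σ * τ) t) ((c ∘ τ) t)).prod := by
    rw [colDet, ← Equiv.sum_comp (Equiv.mulRight τ), ← Finset.sum_neg_distrib]
    refine Finset.sum_congr rfl fun σ _ => ?_
    simp [Perm.sign_mul, hτ]
  rw [hreindex, colDet, ← sub_eq_zero, sub_neg_eq_add, neg_add_eq_sub, ← hcancel,
    ← Finset.sum_sub_distrib]
  simp_rw [← smul_sub, hterm]

theorem colDet_comp_perm (hF : CapelliRelation F) (π : Perm (Fin (n + 1)))
    (c : Fin (n + 1) → Fin (n + 1)) :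
    colDet F (c ∘ π) = (Perm.sign π : ℤ) • colDet F c := by
  have hπ : π ∈ Submonoid.closure (Set.range fun i : Fin n => swap i.castSucc i.succ) := by
    rw [Perm.mclosure_swap_castSucc_succ]; trivial
  induction hπ using Submonoid.closure_induction generalizing c with
  | mem _ h =>
    obtain ⟨k, rfl⟩ := h
    rw [colDet_comp_swap hF, Perm.sign_swap (Fin.castSucc_lt_succ (i := k)).ne]
    simp
  | one => simp
  | mul π₁ π₂ _ _ h₁ h₂ =>
    rw [Perm.coe_mul, ← Function.comp_assoc, h₂, h₁, smul_smul, Perm.sign_mul, mul_comm]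
    simp

theorem colDet_eq_zero_of_eq [IsAddTorsionFree A] (hF : CapelliRelation F)
    {c : Fin (n + 1) → Fin (n + 1)} {x y : Fin (n + 1)} (hxy : x ≠ y) (hc : c x = c y) :
    colDet F c = 0 := by
  have hcomp : c ∘ swap x y = c := by
    ext t
    rcases eq_or_ne t x with rfl | htx
    · simp [hc]
    rcases eq_or_ne t y with rfl | hty
    · simp [hc]
    · simp [swap_apply_of_ne_of_ne htx hty]
  have := colDet_comp_perm hF (swap x y) c
  rwa [hcomp, Perm.sign_swap hxy, Units.val_neg, Units.val_one, neg_one_smul, self_eq_neg] at this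

def colCofactor (F : ℕ → Fin (n + 1) → Fin (n + 1) → A) (d : Fin n → Fin (n + 1))
    (i : Fin (n + 1)) : A :=
  ∑ σ ∈ Finset.univ.filter (fun σ : Perm (Fin (n + 1)) => σ (Fin.last n) = i),
    (Perm.sign σ : ℤ) • ((List.finRange n).map fun t : Fin n => F t (σ t.castSucc) (d t)).prod

theorem colDet_snoc (F : ℕ → Fin (n + 1) → Fin (n + 1) → A) (d : Fin n → Fin (n + 1))
    (q : Fin (n + 1)) :
    colDet F (Fin.snoc d q : Fin (n + 1) → Fin (n + 1)) =
      ∑ i, colCofactor F d i * F n i q := by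
  rw [colDet, ← Finset.sum_fiberwise Finset.univ fun σ : Perm (Fin (n + 1)) => σ (Fin.last n)]
  refine Finset.sum_congr rfl fun i _ => ?_
  rw [colCofactor, Finset.sum_mul]
  refine Finset.sum_congr rfl fun σ hσ => ?_
  rw [(Finset.mem_filter.mp hσ).2.symm, smul_mul_assoc, List.finRange_succ_last]
  simp [Function.comp_def]

/-- Row `p` is the cofactor row of the last column after column `p` has been moved there; against
any other column `q` it computes a column determinant with a repeated column. -/
def colAdj (F : ℕ → Fin (n + 1) → Fin (n + 1) → A) : Matrix (Fin (n + 1)) (Fin (n + 1)) A :=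
  Matrix.of fun p i => (Perm.sign (swap (Fin.last n) p) : ℤ) •
    colCofactor F (swap (Fin.last n) p ∘ Fin.castSucc) i

theorem colAdj_mul [IsAddTorsionFree A] (hF : CapelliRelation F) :
    colAdj F * Matrix.of (F n) = Matrix.scalar _ (colDet F id) := by
  ext p q
  set π := swap (Fin.last n) p
  have hrow : (colAdj F * Matrix.of (F n)) p q =
      (Perm.sign π : ℤ) •
        colDet F (Fin.snoc (π ∘ Fin.castSucc) q : Fin (n + 1) → Fin (n + 1)) := by
    simp only [Matrix.mul_apply, colAdj, Matrix.of_apply, colDet_snoc, Finset.smul_sum,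
      smul_mul_assoc]
    rfl
  rw [hrow]
  rcases eq_or_ne p q with rfl | hpq
  · have hπ : (Fin.snoc (π ∘ Fin.castSucc) p : Fin (n + 1) → Fin (n + 1)) = id ∘ π := by
      ext t
      induction t using Fin.lastCases <;> simp [π]
    rw [hπ, colDet_comp_perm hF, smul_smul, ← Units.val_mul, Int.units_mul_self]
    simp
  · have hx : π q ≠ Fin.last n := by
      simpa [π, swap_apply_eq_iff] using hpq.symm
    obtain ⟨j, hj⟩ := Fin.exists_castSucc_eq.mpr hx
    rw [colDet_eq_zero_of_eq hF hx (by
      rw [← hj, Fin.snoc_castSucc, Function.comp_apply, hj, Fin.snoc_last]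
      exact swap_apply_self _ _ _), Matrix.scalar_apply,
      Matrix.diagonal_apply_ne _ hpq, smul_zero]

end ColumnDeterminant

section FactorTheorem

variable {R : Type*} [Ring R] {ι : Type*} [Fintype ι] [DecidableEq ι]

theorem Matrix.coeff_mul_scalar_X_sub_map_C (G : Matrix ι ι R[X]) (M : Matrix ι ι R) (j : ℕ)
    (i q : ι) :
    ((G * (Matrix.scalar ι X - M.map C) : Matrix ι ι R[X]) i q).coeff j =
      (G i q * X).coeff j - (G.map (coeff · j) * M) i q := by
  rw [Matrix.mul_sub, Matrix.sub_apply, Matrix.scalar_apply, Matrix.mul_diagonal, coeff_sub]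
  simp [Matrix.mul_apply, finsetSum_coeff]

theorem Matrix.eval_map_scalar_eq_zero_of_mul_X_sub_C {G : Matrix ι ι R[X]} {M : Matrix ι ι R}
    {p : R[X]} (h : G * (Matrix.scalar ι X - M.map C) = Matrix.scalar ι p) :
    (p.map (Matrix.scalar ι)).eval M = 0 := by
  obtain ⟨N, hN⟩ : ∃ N, ∀ i q, (G i q).natDegree < N :=
    ⟨Finset.univ.sup (fun iq : ι × ι => (G iq.1 iq.2).natDegree) + 1, fun i q =>
      Nat.lt_succ_of_le (Finset.le_sup (f := fun iq : ι × ι => (G iq.1 iq.2).natDegree)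
        (Finset.mem_univ (i, q)))⟩
  set Q : (Matrix ι ι R)[X] := ∑ j ∈ Finset.range N, monomial j (G.map (coeff · j))
  have hQ : ∀ j, Q.coeff j = G.map (coeff · j) := by
    intro j
    simp only [Q, finsetSum_coeff, coeff_monomial, Finset.sum_ite_eq', Finset.mem_range]
    split_ifs with hj
    · rfl
    · ext i q
      simp [coeff_eq_zero_of_natDegree_lt ((hN i q).trans_le (not_lt.mp hj))]
  have hcoeff : ∀ j, (p.map (Matrix.scalar ι)).coeff j = (Q * X).coeff j - Q.coeff j * M := by
    intro j
    ext i q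
    have hX : (Q * X).coeff j i q = (G i q * X).coeff j := by
      rcases j with _ | j <;> simp [coeff_mul_X, hQ]
    have hdiag : ((Matrix.scalar ι p) i q).coeff j = Matrix.scalar ι (p.coeff j) i q := by
      by_cases hiq : i = q <;> simp [hiq]
    have hentry := congrArg (fun A : Matrix ι ι R[X] => (A i q).coeff j) h
    simp only [Matrix.coeff_mul_scalar_X_sub_map_C, hdiag, ← hQ] at hentry
    rw [coeff_map, Matrix.sub_apply, hX, hentry]
  have hfactor : Q * (X - C M) = p.map (Matrix.scalar ι) := by
    ext1 j
    rw [hcoeff, mul_sub, coeff_sub, coeff_mul_C]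
  rw [← hfactor]
  exact eval_mul_X_sub_C M

end FactorTheorem

theorem eq_zero_of_forall_sum_pow_smul_eq_zero {K V : Type*} [Field K] [Infinite K]
    [AddCommGroup V] [Module K V] {d : ℕ} {a : ℕ → V}
    (h : ∀ u : K, ∑ j ∈ Finset.range d, u ^ j • a j = 0) {j : ℕ} (hj : j < d) :
    a j = 0 := by
  rw [← Module.forall_dual_apply_eq_zero_iff K]
  intro φ
  set p : K[X] := ∑ k ∈ Finset.range d, C (φ (a k)) * X ^ k
  have hp : p = 0 := funext fun u => by
    have := congrArg φ (h u)
    simp only [map_sum, map_smul, smul_eq_mul, map_zero] at this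
    simp only [p, eval_finsetSum, eval_mul, eval_C, eval_pow, eval_X, eval_zero]
    rw [← this]
    exact Finset.sum_congr rfl fun k _ => mul_comm _ _
  have := congrArg (coeff · j) hp
  simp only [p, finsetSum_coeff, coeff_C_mul_X_pow, coeff_zero] at this
  rwa [Finset.sum_ite_eq, if_pos (Finset.mem_range.mpr hj)] at this

theorem eval₂_algebraMap_eq_sum_range_smul {K A : Type*} [CommSemiring K] [Semiring A]
    [Algebra K A] {p : A[X]} {d : ℕ} (hp : p.natDegree < d) (u : K) :
    p.eval₂ (RingHom.id A) (algebraMap K A u) =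
      ∑ j ∈ Finset.range d, u ^ j • p.coeff j := by
  rw [eval₂_eq_sum_range' _ hp]
  refine Finset.sum_congr rfl fun j _ => ?_
  rw [RingHom.id_apply, ← map_pow, ← Algebra.commutes, Algebra.smul_def]

theorem Egen_mul_sub_mul (n : ℕ) (i j k l : Fin n) :
    Egen n i j * Egen n k l - Egen n k l * Egen n i j =
      (if k = j then Egen n i l else 0) - (if i = l then Egen n k j else 0) := by
  have hsingle : Matrix.single i j (1 : ℂ) * Matrix.single k l 1 -
      Matrix.single k l 1 * Matrix.single i j 1 =
      (if k = j then Matrix.single i l 1 else 0) - (if i = l then Matrix.single k j 1 else 0) := by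
    by_cases hkj : k = j <;> by_cases hil : i = l <;>
      simp_all [Matrix.single_mul_single_same, Matrix.single_mul_single_of_ne, Ne.symm]
  have hlie := (UniversalEnvelopingAlgebra.ι ℂ).map_lie (Matrix.single i j (1 : ℂ))
    (Matrix.single k l 1)
  rw [Ring.lie_def, Ring.lie_def, hsingle] at hlie
  rw [Egen, Egen, ← hlie]
  split_ifs <;> simp [Egen]

/-- The entries of `(u - k) + E` with `u` replaced by the central indeterminate `X`. -/
def capelliPolyEntry (n : ℕ) (k : ℕ) (i j : Fin n) : (glUEA n)[X] :=
  (if i = j then X - (k : (glUEA n)[X]) else 0) + C (Egen n i j)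

theorem capelliRelation_capelliPolyEntry (n : ℕ) : CapelliRelation (capelliPolyEntry n) :=
  capelliRelation_of_commutator (e := fun i j => C (Egen n i j))
    (fun i j k l => by simpa [apply_ite C] using congrArg C (Egen_mul_sub_mul n i j k l))
    (fun x => commute_X x)

theorem natDegree_capelliPolyEntry_le (n k : ℕ) (i j : Fin n) :
    (capelliPolyEntry n k i j).natDegree ≤ 1 := by
  unfold capelliPolyEntry
  refine (natDegree_add_le _ _).trans (max_le ?_ (by simp))
  split_ifs
  · exact (natDegree_sub_le _ _).trans (by simp [natDegree_X_le])
  · simp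

theorem eval₂_capelliPolyEntry (n : ℕ) (u : ℂ) (k : ℕ) (i j : Fin n) :
    (capelliPolyEntry n k i j).eval₂ (RingHom.id _) (algebraMap ℂ (glUEA n) u) =
      capelliEntry n (u - k) i j := by
  simp [capelliPolyEntry, capelliEntry, apply_ite]

theorem eval₂_colDet_capelliPolyEntry (n : ℕ) (u : ℂ) :
    (colDet (capelliPolyEntry n) id).eval₂ (RingHom.id _) (algebraMap ℂ (glUEA n) u) =
      capelli n u := by
  let ev := eval₂RingHom' (RingHom.id (glUEA n)) (algebraMap ℂ (glUEA n) u)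
    fun a => (Algebra.commutes u a).symm
  change ev _ = _
  rw [colDet, capelli, map_sum]
  refine Finset.sum_congr rfl fun σ _ => ?_
  rw [map_zsmul, map_list_prod, List.map_map]
  congr 2
  exact List.map_congr_left fun t _ => eval₂_capelliPolyEntry n u t (σ t) t

theorem capelliPolyEntry_last (m : ℕ) :
    Matrix.of (capelliPolyEntry (m + 1) m) = Matrix.scalar _ X -
      ((((m + 1 : ℕ) : ℂ) - 1) • (1 : Matrix (Fin (m + 1)) (Fin (m + 1)) (glUEA (m + 1))) -
        Emat (m + 1)).map C := by
  refine Matrix.ext fun i j => ?_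
  by_cases hij : i = j
  · subst hij
    simp only [capelliPolyEntry, Emat, Matrix.of_apply, Matrix.sub_apply, Matrix.smul_apply,
      Matrix.one_apply_eq, Matrix.map_apply, Matrix.scalar_apply, Matrix.diagonal_apply_eq, if_true]
    rw [Nat.cast_add_one, add_sub_cancel_right, Nat.cast_smul_eq_nsmul, nsmul_one, C_sub,
      C_eq_natCast]
    abel
  · simp [capelliPolyEntry, Emat, hij]

/-- Cayley–Hamilton for `gl_n` (first identity): `C(−E + n − 1) = 0`. -/
theorem stmt10 (n : ℕ) (c : ℕ → glUEA n)
    (hc : ∀ u : ℂ, capelli n u = ∑ j ∈ Finset.range (n + 1), u ^ j • c j) :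
    ∑ j ∈ Finset.range (n + 1),
        c j • (((n : ℂ) - 1) • (1 : Matrix (Fin n) (Fin n) (glUEA n)) - Emat n) ^ j
      = 0 := by
  cases n with
  | zero => exact Subsingleton.elim _ _
  | succ m =>
  set D := colDet (capelliPolyEntry (m + 1)) id
  have hdeg : D.natDegree < m + 1 + 1 :=
    (natDegree_colDet_le (natDegree_capelliPolyEntry_le _) id).trans_lt (Nat.lt_succ_self _)
  have hcoeff : ∀ j < m + 1 + 1, c j = D.coeff j := by
    refine fun j hj => sub_eq_zero.mp <| eq_zero_of_forall_sum_pow_smul_eq_zero (K := ℂ)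
      (a := fun j => c j - D.coeff j) (fun u => ?_) hj
    simp only [smul_sub, Finset.sum_sub_distrib, ← hc,
      ← eval₂_algebraMap_eq_sum_range_smul hdeg, D, eval₂_colDet_capelliPolyEntry, sub_self]
  have : IsAddTorsionFree (glUEA (m + 1))[X] := .of_isTorsionFree ℂ _
  have hfactor := Matrix.eval_map_scalar_eq_zero_of_mul_X_sub_C
    (capelliPolyEntry_last m ▸ colAdj_mul (capelliRelation_capelliPolyEntry (m + 1)))
  rw [eval_eq_sum_range' (natDegree_map_le.trans_lt hdeg)] at hfactor
  rw [← hfactor]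
  refine Finset.sum_congr rfl fun j hj => ?_
  rw [hcoeff j (Finset.mem_range.mp hj), coeff_map, Matrix.scalar_apply,
    ← Matrix.smul_eq_diagonal_mul]
end
end

section
/- The Yangian coproduct is well defined: there exists a ℂ-algebra homomorphism Δ : Y(n) → Y(n) ⊗ Y(n) such that Δ(t^{(r)}_{ij}) = Σ_{a=1}^n Σ_{p+q=r, p,q ≥ 0} t^{(p)}_{ia} ⊗ t^{(q)}_{aj} for all r ≥ 1 and 1 ≤ i,j ≤ n, where t^{(0)}_{ij} = δ_ij. (In series form this is Δ : t_ij(u) ↦ Σ_{a=1}^n t_ia(u) ⊗ t_aj(u).) -/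
noncomputable section

/-- Index of the Yangian generator `t^{(p+1)}_{ij}`. -/
abbrev YIdx (n : ℕ) : Type := ℕ × Fin n × Fin n

/-- The element `t^{(r)}_{ij}` of the free algebra: `t^{(0)}_{ij} = δ_ij`, and for
`r ≥ 1` it is the generator indexed by `(r−1, i, j)`. -/
noncomputable def ygen (n : ℕ) : ℕ → Fin n → Fin n → FreeAlgebra ℂ (YIdx n)
  | 0, i, j => if i = j then 1 else 0
  | r + 1, i, j => FreeAlgebra.ι ℂ (r, i, j)

/-- The defining relations of the Yangian:
`[t^{(r)}_{ij}, t^{(s)}_{kl}] = Σ_{a=1}^{min(r,s)} (t^{(a−1)}_{kj} t^{(r+s−a)}_{il}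
− t^{(r+s−a)}_{kj} t^{(a−1)}_{il})`. -/
def yRel (n : ℕ) : FreeAlgebra ℂ (YIdx n) → FreeAlgebra ℂ (YIdx n) → Prop := fun x y =>
  ∃ r s : ℕ, ∃ i j k l : Fin n, 1 ≤ r ∧ 1 ≤ s ∧
    x = ygen n r i j * ygen n s k l - ygen n s k l * ygen n r i j ∧
    y = ∑ a ∈ Finset.Icc 1 (min r s),
      (ygen n (a - 1) k j * ygen n (r + s - a) i l
        - ygen n (r + s - a) k j * ygen n (a - 1) i l)

/-- The Yangian `Y(n)`: the quotient of the free algebra by the two-sided ideal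
generated by the defining relations. -/
abbrev Yangian (n : ℕ) : Type := RingQuot (yRel n)

/-- The generator `t^{(r)}_{ij}` of `Y(n)` (with `t^{(0)}_{ij} = δ_ij`). -/
noncomputable def tGen (n : ℕ) (r : ℕ) (i j : Fin n) : Yangian n :=
  RingQuot.mkAlgHom ℂ (yRel n) (ygen n r i j)

open scoped TensorProduct

/-!
Given `t⁽⁰⁾ = 1`, the defining relations of `Y(n)` are equivalent to their difference form
`[t⁽ʳ⁺¹⁾ᵢⱼ, t⁽ˢ⁾ₖₗ] - [t⁽ʳ⁾ᵢⱼ, t⁽ˢ⁺¹⁾ₖₗ] = t⁽ʳ⁾ₖⱼ t⁽ˢ⁾ᵢₗ - t⁽ˢ⁾ₖⱼ t⁽ʳ⁾ᵢₗ`, the coefficient form of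
the RTT relation `R(u - v) T₁(u) T₂(v) = T₂(v) T₁(u) R(u - v)` with `R(u) = 1 - P u⁻¹`.
Written with `T₁ = T ⊗ 1`, `T₂ = 1 ⊗ T` and the flip `P` of `ℂⁿ ⊗ ℂⁿ`, it reads
`[T₁⁽ʳ⁺¹⁾, T₂⁽ˢ⁾] - [T₁⁽ʳ⁾, T₂⁽ˢ⁺¹⁾] = P T₁⁽ʳ⁾ T₂⁽ˢ⁾ - T₂⁽ˢ⁾ T₁⁽ʳ⁾ P`, an identity in a single ring,
and a direct computation shows that it passes to the product `T(u) T'(u)` of two solutions whose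
entries commute with each other. The proposed `Δ(T(u))` is the product of the solutions
`T(u) ⊗ 1` and `1 ⊗ T(u)` of `Y(n) ⊗ Y(n)`, so it satisfies the relations and `Δ` is well defined.
-/

open Finset

section CauchyProduct

variable {R : Type*} [Semiring R]

def cauchyProduct (A B : ℕ → R) (r : ℕ) : R := ∑ x ∈ antidiagonal r, A x.1 * B x.2

lemma cauchyProduct_zero (A B : ℕ → R) : cauchyProduct A B 0 = A 0 * B 0 := by
  simp [cauchyProduct]

lemma map_cauchyProduct {S F : Type*} [Semiring S] [FunLike F R S] [RingHomClass F R S] (f : F)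
    (A B : ℕ → R) (r : ℕ) : f (cauchyProduct A B r) = cauchyProduct (f ∘ A) (f ∘ B) r := by
  simp [cauchyProduct, map_sum, map_mul]

end CauchyProduct

lemma Finset.Nat.sum_antidiagonal_succ_of_eq_zero {M : Type*} [AddCommMonoid M] {n : ℕ}
    {f : ℕ × ℕ → M} (h : f (0, n + 1) = 0) :
    ∑ p ∈ antidiagonal (n + 1), f p = ∑ p ∈ antidiagonal n, f (p.1 + 1, p.2) := by
  rw [Finset.Nat.sum_antidiagonal_succ, h, zero_add]

lemma Finset.Nat.sum_antidiagonal_succ'_of_eq_zero {M : Type*} [AddCommMonoid M] {n : ℕ}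
    {f : ℕ × ℕ → M} (h : f (n + 1, 0) = 0) :
    ∑ p ∈ antidiagonal (n + 1), f p = ∑ p ∈ antidiagonal n, f (p.1, p.2 + 1) := by
  rw [Finset.Nat.sum_antidiagonal_succ', h, zero_add]

section RTTPair

variable {R : Type*} [Ring R]

def IsRTTPair (P : R) (A B : ℕ → R) : Prop :=
  ∀ r s, ⁅A (r + 1), B s⁆ - ⁅A r, B (s + 1)⁆ = P * (A r * B s) - B s * A r * P

lemma lie_mul_mul_of_commute {a a' b b' : R} (h : Commute a b') (h' : Commute a' b) :
    ⁅a * a', b * b'⁆ = ⁅a, b⁆ * (a' * b') + b * a * ⁅a', b'⁆ := by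
  have e₁ : a * a' * (b * b') = a * b * (a' * b') := by
    rw [mul_assoc, h'.left_comm, ← mul_assoc]
  have e₂ : b * b' * (a * a') = b * a * (b' * a') := by
    rw [mul_assoc, h.symm.left_comm, ← mul_assoc]
  simp only [Ring.lie_def, e₁, e₂]
  noncomm_ring

variable {P : R} {A B A' B' : ℕ → R}

theorem isRTTPair_cauchyProduct (h : IsRTTPair P A B) (h' : IsRTTPair P A' B')
    (hA : A 0 = 1) (hB : B 0 = 1) (hA' : A' 0 = 1) (hB' : B' 0 = 1)
    (hAB' : ∀ p u, Commute (A p) (B' u)) (hA'B : ∀ q m, Commute (A' q) (B m)) :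
    IsRTTPair P (cauchyProduct A A') (cauchyProduct B B') := by
  have lie_eq : ∀ a b, ⁅cauchyProduct A A' a, cauchyProduct B B' b⁆ =
      ∑ x ∈ antidiagonal a, ∑ y ∈ antidiagonal b, ⁅A x.1, B y.1⁆ * (A' x.2 * B' y.2) +
      ∑ x ∈ antidiagonal a, ∑ y ∈ antidiagonal b, B y.1 * A x.1 * ⁅A' x.2, B' y.2⁆ := by
    intro a b
    rw [Ring.lie_def, cauchyProduct, cauchyProduct, sum_mul_sum, sum_mul_sum,
      sum_comm (s := antidiagonal b) (β := R), ← sum_sub_distrib, ← sum_add_distrib]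
    refine sum_congr rfl fun x _ => ?_
    rw [← sum_sub_distrib, ← sum_add_distrib]
    exact sum_congr rfl fun y _ => by
      rw [← Ring.lie_def, lie_mul_mul_of_commute (hAB' _ _) (hA'B _ _)]
  have summand_eq : ∀ p q m u, (⁅A (p + 1), B m⁆ - ⁅A p, B (m + 1)⁆) * (A' q * B' u)
      + B m * A p * (⁅A' (q + 1), B' u⁆ - ⁅A' q, B' (u + 1)⁆)
      = P * (A p * A' q * (B m * B' u)) - B m * B' u * (A p * A' q) * P := by
    intro p q m u
    have e₁ : A p * A' q * (B m * B' u) = A p * B m * (A' q * B' u) := by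
      rw [mul_assoc, (hA'B q m).left_comm, ← mul_assoc]
    have e₂ : B m * B' u * (A p * A' q) = B m * A p * (B' u * A' q) := by
      rw [mul_assoc, (hAB' p u).symm.left_comm, ← mul_assoc]
    rw [h, h', e₁, e₂]
    noncomm_ring
  have one_lie : ∀ x : R, ⁅(1 : R), x⁆ = 0 := fun x => (Commute.one_left x).lie_eq
  have lie_one : ∀ x : R, ⁅x, (1 : R)⁆ = 0 := fun x => (Commute.one_right x).lie_eq
  intro r s
  -- Shift the antidiagonals so that the relations for `(A, B)` and `(A', B')` apply termwise;
  -- the boundary terms vanish because the zeroth coefficients are `1`.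
  rw [lie_eq, lie_eq, Nat.sum_antidiagonal_succ_of_eq_zero (by simp [hA, one_lie]),
    Nat.sum_antidiagonal_succ'_of_eq_zero (by simp [hA', one_lie])]
  have shift_B : ∑ x ∈ antidiagonal r, ∑ y ∈ antidiagonal (s + 1),
      ⁅A x.1, B y.1⁆ * (A' x.2 * B' y.2) =
      ∑ x ∈ antidiagonal r, ∑ y ∈ antidiagonal s, ⁅A x.1, B (y.1 + 1)⁆ * (A' x.2 * B' y.2) :=
    sum_congr rfl fun x _ => Nat.sum_antidiagonal_succ_of_eq_zero (by simp [hB, lie_one])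
  have shift_B' : ∑ x ∈ antidiagonal r, ∑ y ∈ antidiagonal (s + 1),
      B y.1 * A x.1 * ⁅A' x.2, B' y.2⁆ =
      ∑ x ∈ antidiagonal r, ∑ y ∈ antidiagonal s, B y.1 * A x.1 * ⁅A' x.2, B' (y.2 + 1)⁆ :=
    sum_congr rfl fun x _ => Nat.sum_antidiagonal_succ'_of_eq_zero (by simp [hB', lie_one])
  rw [shift_B, shift_B']
  calc _ = ∑ x ∈ antidiagonal r, ∑ y ∈ antidiagonal s,
        ((⁅A (x.1 + 1), B y.1⁆ - ⁅A x.1, B (y.1 + 1)⁆) * (A' x.2 * B' y.2)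
          + B y.1 * A x.1 * (⁅A' (x.2 + 1), B' y.2⁆ - ⁅A' x.2, B' (y.2 + 1)⁆)) := by
        simp only [sub_mul, mul_sub, sum_add_distrib, sum_sub_distrib]
        abel
    _ = ∑ x ∈ antidiagonal r, ∑ y ∈ antidiagonal s,
        (P * (A x.1 * A' x.2 * (B y.1 * B' y.2)) - B y.1 * B' y.2 * (A x.1 * A' x.2) * P) := by
        simp only [summand_eq]
    _ = _ := by
        rw [cauchyProduct, cauchyProduct, sum_mul_sum, sum_mul_sum,
          sum_comm (s := antidiagonal s) (β := R)]
        simp only [mul_sum, sum_mul, ← sum_sub_distrib]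

end RTTPair

section RTT

variable {m A : Type*} [Ring A]

lemma Matrix.commute_one_apply [DecidableEq m] (i j : m) (x : A) :
    Commute ((1 : Matrix m m A) i j) x := by
  rw [Matrix.one_apply]
  split_ifs
  exacts [Commute.one_left x, Commute.zero_left x]

def IsRTT (T : ℕ → Matrix m m A) : Prop :=
  ∀ r s i j k l, ⁅T (r + 1) i j, T s k l⁆ - ⁅T r i j, T (s + 1) k l⁆
    = T r k j * T s i l - T s k j * T r i l

def relSummand (T : ℕ → Matrix m m A) (N : ℕ) (i j k l : m) (a : ℕ) : A :=
  T (a - 1) k j * T (N - a) i l - T (N - a) k j * T (a - 1) i l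

variable {T : ℕ → Matrix m m A}

lemma IsRTT.map {B F : Type*} [Ring B] [FunLike F A B] [RingHomClass F A B] (hT : IsRTT T)
    (f : F) : IsRTT fun r => (T r).map f := by
  intro r s i j k l
  simpa only [Matrix.map_apply, Ring.lie_def, ← map_mul, ← map_sub] using
    congrArg f (hT r s i j k l)

lemma relSummand_add_relSummand_reflect {N a : ℕ} (h₁ : 1 ≤ a) (h₂ : a ≤ N) (i j k l : m) :
    relSummand T N i j k l a + relSummand T N i j k l (N + 1 - a) = 0 := by
  rw [relSummand, relSummand, show N + 1 - a - 1 = N - a by omega,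
    show N - (N + 1 - a) = a - 1 by omega]
  abel

lemma sum_Icc_relSummand_eq_zero (r s : ℕ) (i j k l : m) :
    ∑ a ∈ Icc (s + 1) r, relSummand T (r + s) i j k l a = 0 := by
  -- `a ↦ r + s + 1 - a` pairs each summand with its negative; at a fixed point `a - 1 = r + s - a`.
  refine sum_involution (fun a _ => r + s + 1 - a) (fun a ha => ?_) (fun a ha hne => ?_)
    (fun a ha => ?_) (fun a ha => ?_) <;> rw [mem_Icc] at ha
  · exact relSummand_add_relSummand_reflect (by omega) (by omega) i j k l
  · contrapose! hne
    rw [relSummand, show a - 1 = r + s - a by omega, sub_self]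
  · rw [mem_Icc]
    omega
  · omega

lemma sum_Icc_one_relSummand_eq_sum_min (r s : ℕ) (i j k l : m) :
    ∑ a ∈ Icc 1 r, relSummand T (r + s) i j k l a
      = ∑ a ∈ Icc 1 (min r s), relSummand T (r + s) i j k l a := by
  rcases le_total r s with h | h
  · rw [min_eq_left h]
  · have split := sum_Ioc_consecutive (relSummand T (r + s) i j k l) (Nat.zero_le s) h
    simp only [← Icc_add_one_left_eq_Ioc, zero_add] at split
    rw [min_eq_right h, ← split, sum_Icc_relSummand_eq_zero, add_zero]

lemma lie_eq_sum_Icc_of_isRTT [DecidableEq m] (h₀ : T 0 = 1) (hT : IsRTT T) (r s : ℕ)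
    (i j k l : m) : ⁅T r i j, T s k l⁆ = ∑ a ∈ Icc 1 r, relSummand T (r + s) i j k l a := by
  induction r generalizing s with
  | zero => simp [h₀, (Matrix.commute_one_apply i j (T s k l)).lie_eq]
  | succ r ih =>
    rw [eq_add_of_sub_eq' (hT r s i j k l), ih, sum_Icc_succ_top (by omega),
      show r + (s + 1) = r + 1 + s by omega, relSummand, Nat.add_sub_cancel,
      Nat.add_sub_cancel_left]

lemma isRTT_of_lie_eq_sum_Icc
    (h : ∀ r s i j k l, ⁅T r i j, T s k l⁆ = ∑ a ∈ Icc 1 r, relSummand T (r + s) i j k l a) :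
    IsRTT T := by
  intro r s i j k l
  rw [h, h, sum_Icc_succ_top (by omega), show r + (s + 1) = r + 1 + s by omega,
    add_sub_cancel_left, relSummand, Nat.add_sub_cancel, Nat.add_sub_cancel_left]

theorem isRTT_iff_lie_eq_sum [DecidableEq m] (h₀ : T 0 = 1) :
    IsRTT T ↔ ∀ r s : ℕ, 1 ≤ r → 1 ≤ s → ∀ i j k l : m,
      ⁅T r i j, T s k l⁆ = ∑ a ∈ Icc 1 (min r s), relSummand T (r + s) i j k l a := by
  simp only [← sum_Icc_one_relSummand_eq_sum_min]
  refine ⟨fun hT r s _ _ => lie_eq_sum_Icc_of_isRTT h₀ hT r s, fun h => ?_⟩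
  refine isRTT_of_lie_eq_sum_Icc fun r s i j k l => ?_
  rcases Nat.eq_zero_or_pos r with rfl | hr
  · simp [h₀, (Matrix.commute_one_apply i j (T s k l)).lie_eq]
  rcases Nat.eq_zero_or_pos s with rfl | hs
  · rw [h₀, (Matrix.commute_one_apply k l (T r i j)).symm.lie_eq, ← sum_Icc_relSummand_eq_zero r 0]
  exact h r s hr hs i j k l

end RTT

section Embedding

variable {m A : Type*} [Fintype m] [DecidableEq m] [Ring A]

-- `X ⊗ 1` and `1 ⊗ X`, as matrices indexed by `m × m`.
def embedLeft : Matrix m m A →+* Matrix (m × m) (m × m) A :=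
  (Matrix.blockDiagonalRingHom m m A).comp (Pi.constRingHom m (Matrix m m A))

def embedRight : Matrix m m A →+* Matrix (m × m) (m × m) A :=
  (Matrix.reindexRingEquiv A (Equiv.prodComm m m)).toRingHom.comp embedLeft

def swapMatrix : Matrix (m × m) (m × m) A := (Equiv.prodComm m m).toPEquiv.toMatrix

lemma embedLeft_mul_embedRight_apply (X Y : Matrix m m A) (i j k l : m) :
    (embedLeft X * embedRight Y) (i, k) (j, l) = X i j * Y k l := by
  simp [embedLeft, embedRight, Matrix.mul_apply, Fintype.sum_prod_type, Matrix.blockDiagonal_apply']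

lemma embedRight_mul_embedLeft_apply (X Y : Matrix m m A) (i j k l : m) :
    (embedRight Y * embedLeft X) (i, k) (j, l) = Y k l * X i j := by
  simp [embedLeft, embedRight, Matrix.mul_apply, Fintype.sum_prod_type, Matrix.blockDiagonal_apply']

lemma swapMatrix_mul_apply (M : Matrix (m × m) (m × m) A) (i j k l : m) :
    (swapMatrix * M : Matrix (m × m) (m × m) A) (i, k) (j, l) = M (k, i) (j, l) := by
  simp [swapMatrix, PEquiv.toMatrix_toPEquiv_mul]

lemma mul_swapMatrix_apply (M : Matrix (m × m) (m × m) A) (i j k l : m) :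
    (M * swapMatrix : Matrix (m × m) (m × m) A) (i, k) (j, l) = M (i, k) (l, j) := by
  simp [swapMatrix, PEquiv.mul_toMatrix_apply, ← Equiv.toPEquiv_symm]

lemma commute_embedLeft_embedRight {X Y : Matrix m m A}
    (h : ∀ i j k l, Commute (X i j) (Y k l)) : Commute (embedLeft X) (embedRight Y) := by
  ext ⟨i, k⟩ ⟨j, l⟩
  rw [embedLeft_mul_embedRight_apply, embedRight_mul_embedLeft_apply, (h i j k l).eq]

lemma isRTT_iff_isRTTPair {T : ℕ → Matrix m m A} :
    IsRTT T ↔ IsRTTPair swapMatrix (embedLeft ∘ T) (embedRight ∘ T) := by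
  refine forall₂_congr fun r s => ?_
  simp only [Function.comp_apply, ← Matrix.ext_iff, Prod.forall, Ring.lie_def, Matrix.sub_apply,
    swapMatrix_mul_apply, mul_swapMatrix_apply, embedLeft_mul_embedRight_apply,
    embedRight_mul_embedLeft_apply]
  exact ⟨fun h i k j l => h i j k l, fun h i j k l => h i k j l⟩

theorem isRTT_cauchyProduct {X Y : ℕ → Matrix m m A} (hX : IsRTT X) (hY : IsRTT Y)
    (hX₀ : X 0 = 1) (hY₀ : Y 0 = 1) (hXY : ∀ p q i j k l, Commute (X p i j) (Y q k l)) :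
    IsRTT (cauchyProduct X Y) := by
  rw [isRTT_iff_isRTTPair] at hX hY ⊢
  have hL : embedLeft ∘ cauchyProduct X Y = cauchyProduct (embedLeft ∘ X) (embedLeft ∘ Y) :=
    funext (map_cauchyProduct _ X Y)
  have hR : embedRight ∘ cauchyProduct X Y = cauchyProduct (embedRight ∘ X) (embedRight ∘ Y) :=
    funext (map_cauchyProduct _ X Y)
  rw [hL, hR]
  exact isRTTPair_cauchyProduct hX hY (by simp [hX₀]) (by simp [hX₀]) (by simp [hY₀])
    (by simp [hY₀]) (fun p u => commute_embedLeft_embedRight (hXY p u))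
    (fun q p => commute_embedLeft_embedRight fun i j k l => (hXY p q k l i j).symm)

end Embedding

section Coproduct

open Algebra.TensorProduct

variable (n : ℕ)

def tGenMatrix (r : ℕ) : Matrix (Fin n) (Fin n) (Yangian n) := Matrix.of (tGen n r)

lemma tGenMatrix_zero : tGenMatrix n 0 = 1 := by
  ext i j
  by_cases h : i = j <;> simp [tGenMatrix, tGen, ygen, Matrix.one_apply, h]

lemma map_tGenMatrix_zero {B F : Type*} [Ring B] [FunLike F (Yangian n) B]
    [RingHomClass F (Yangian n) B] (f : F) : (tGenMatrix n 0).map f = 1 := by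
  rw [tGenMatrix_zero, Matrix.map_one _ (map_zero f) (map_one f)]

lemma isRTT_tGenMatrix : IsRTT (tGenMatrix n) := by
  refine (isRTT_iff_lie_eq_sum (tGenMatrix_zero n)).2 fun r s hr hs i j k l => ?_
  simpa only [Ring.lie_def, map_sub, map_mul, map_sum, relSummand, tGenMatrix, Matrix.of_apply,
    tGen] using
    RingQuot.mkAlgHom_rel ℂ (show yRel n _ _ from ⟨r, s, i, j, k, l, hr, hs, rfl, rfl⟩)

def coproductMatrix : ℕ → Matrix (Fin n) (Fin n) (Yangian n ⊗[ℂ] Yangian n) :=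
  cauchyProduct
    (fun r => (tGenMatrix n r).map (includeLeft : Yangian n →ₐ[ℂ] Yangian n ⊗[ℂ] Yangian n))
    (fun r => (tGenMatrix n r).map (includeRight : Yangian n →ₐ[ℂ] Yangian n ⊗[ℂ] Yangian n))

lemma coproductMatrix_zero : coproductMatrix n 0 = 1 := by
  rw [coproductMatrix, cauchyProduct_zero, map_tGenMatrix_zero, map_tGenMatrix_zero, one_mul]

lemma coproductMatrix_apply (r : ℕ) (i j : Fin n) :
    coproductMatrix n r i j = ∑ a : Fin n, ∑ p ∈ Finset.range (r + 1),
      tGen n p i a ⊗ₜ[ℂ] tGen n (r - p) a j := by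
  simp only [coproductMatrix, cauchyProduct, Matrix.sum_apply, Matrix.mul_apply, Matrix.map_apply,
    includeLeft_apply, includeRight_apply, tmul_mul_tmul, mul_one, one_mul,
    Finset.Nat.sum_antidiagonal_eq_sum_range_succ_mk]
  exact sum_comm

lemma isRTT_coproductMatrix : IsRTT (coproductMatrix n) :=
  isRTT_cauchyProduct ((isRTT_tGenMatrix n).map _) ((isRTT_tGenMatrix n).map _)
    (map_tGenMatrix_zero n _) (map_tGenMatrix_zero n _) fun p q i j k l => by
      simp [Commute, SemiconjBy]

def coproductOnFree : FreeAlgebra ℂ (YIdx n) →ₐ[ℂ] Yangian n ⊗[ℂ] Yangian n :=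
  FreeAlgebra.lift ℂ fun x => coproductMatrix n (x.1 + 1) x.2.1 x.2.2

lemma coproductOnFree_ygen (r : ℕ) (i j : Fin n) :
    coproductOnFree n (ygen n r i j) = coproductMatrix n r i j := by
  cases r with
  | zero => by_cases h : i = j <;> simp [ygen, coproductMatrix_zero, h]
  | succ r => simp [ygen, coproductOnFree]

def coproduct : Yangian n →ₐ[ℂ] Yangian n ⊗[ℂ] Yangian n :=
  RingQuot.liftAlgHom ℂ ⟨coproductOnFree n, by
    rintro _ _ ⟨r, s, i, j, k, l, hr, hs, rfl, rfl⟩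
    simp only [map_sub, map_mul, map_sum, coproductOnFree_ygen]
    simpa only [Ring.lie_def, relSummand] using
      (isRTT_iff_lie_eq_sum (coproductMatrix_zero n)).1 (isRTT_coproductMatrix n) r s hr hs
        i j k l⟩

lemma coproduct_tGen (r : ℕ) (i j : Fin n) :
    coproduct n (tGen n r i j) = coproductMatrix n r i j := by
  rw [coproduct, tGen, RingQuot.liftAlgHom_mkAlgHom_apply, coproductOnFree_ygen]

end Coproduct

/-- The Yangian coproduct is well defined:
`Δ(t^{(r)}_{ij}) = Σ_{a=1}^n Σ_{p+q=r} t^{(p)}_{ia} ⊗ t^{(q)}_{aj}`. -/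
theorem stmt18 (n : ℕ) :
    ∃ D : Yangian n →ₐ[ℂ] (Yangian n ⊗[ℂ] Yangian n),
      ∀ r : ℕ, 1 ≤ r → ∀ i j : Fin n,
        D (tGen n r i j)
          = ∑ a : Fin n, ∑ p ∈ Finset.range (r + 1),
              tGen n p i a ⊗ₜ[ℂ] tGen n (r - p) a j :=
  ⟨coproduct n, fun r _ i j => by rw [coproduct_tGen, coproductMatrix_apply]⟩
end
end
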